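/- arXiv:2403.05214 — 7 statements merged into one kernel-verified Lean document; each statement's English description precedes it below -/
import Mathlib

section
/- Let M ∈ ℂ^{n×n} be an idempotent matrix of rank r with singular value decomposition M = UΣV^H, and let u_j and v_j denote the left and right singular vectors (columns of U and V) associated with the nonzero singular values σ_j, j = 1, …, r. Then u_j^H v_j = σ_j^{−1} for each j = 1, …, r; more precisely, with U_r, V_r ∈ ℂ^{n×r} the first r columns of U and V and Ω = diag(σ₁, …, σ_r), one has V_r^H U_r = Ω^{−1}. -/
open Matrix

/-!
Conjugating `M² = M` by the unitary factors of `M = U Σ Vᴴ` turns it into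
`Σ (Vᴴ U) Σ = Σ`. Entrywise this reads `σᵢ (Vᴴ U)ᵢⱼ σⱼ = δᵢⱼ σᵢ`, which
determines `(Vᴴ U)ᵢⱼ` wherever `σᵢ, σⱼ ≠ 0`.
-/

theorem isIdempotentElem_mul_mul_star_iff {A : Type*} [Monoid A] [StarMul A] {u v : A}
    (hu : u ∈ unitary A) (hv : v ∈ unitary A) (d : A) :
    IsIdempotentElem (u * d * star v) ↔ d * (star v * u) * d = d := by
  have hsq : u * d * star v * (u * d * star v) = u * (d * (star v * u) * d) * star v := by
    simp only [mul_assoc]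
  have hcancel (x : A) : star u * (u * x * star v) * v = x := by
    calc star u * (u * x * star v) * v = (star u * u) * x * (star v * v) := by
          simp only [mul_assoc]
      _ = x := by
          rw [Unitary.star_mul_self_of_mem hu, Unitary.star_mul_self_of_mem hv, one_mul, mul_one]
  rw [IsIdempotentElem, hsq]
  constructor
  · intro h
    rw [← hcancel (d * (star v * u) * d), h, hcancel]
  · intro h
    rw [h]

theorem Matrix.submatrix_eq_diagonal_inv_of_diagonal_mul_mul_diagonal_eq
    {ι κ K : Type*} [Fintype ι] [DecidableEq ι] [DecidableEq κ] [DivisionRing K]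
    {d : ι → K} {A : Matrix ι ι K} (h : diagonal d * A * diagonal d = diagonal d)
    {e : κ → ι} (he : Function.Injective e) (hd : ∀ k, d (e k) ≠ 0) :
    A.submatrix e e = diagonal fun k => (d (e k))⁻¹ := by
  ext k l
  have hkl := congr_fun (congr_fun h (e k)) (e l)
  simp only [mul_diagonal, diagonal_mul, diagonal_apply, he.eq_iff] at hkl
  rw [submatrix_apply, diagonal_apply]
  split_ifs at hkl ⊢ with hkl'
  · subst hkl'
    refine (inv_eq_of_mul_eq_one_right (mul_right_cancel₀ (hd k) ?_)).symm
    rw [hkl, one_mul]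
  · simpa [hd] using hkl

theorem svd_idempotent_inner_products_general {n r : ℕ} (hr : r ≤ n)
    (M U V : Matrix (Fin n) (Fin n) ℂ) (σ : Fin n → ℝ)
    (hM : M * M = M)
    (hU : U ∈ Matrix.unitaryGroup (Fin n) ℂ)
    (hV : V ∈ Matrix.unitaryGroup (Fin n) ℂ)
    (hpos : ∀ i : Fin n, (i : ℕ) < r → 0 < σ i)
    (hsvd : M = U * Matrix.diagonal (fun i => (σ i : ℂ)) * Vᴴ) :
    (∀ j : Fin r,
        (∑ i : Fin n, (starRingEnd ℂ) (U i (Fin.castLE hr j)) * V i (Fin.castLE hr j)) =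
          ((σ (Fin.castLE hr j) : ℂ))⁻¹) ∧
      (V.submatrix id (Fin.castLE hr))ᴴ * U.submatrix id (Fin.castLE hr) =
        (Matrix.diagonal (fun j : Fin r => (σ (Fin.castLE hr j) : ℂ)))⁻¹ := by
  set e := Fin.castLE hr
  have hσ (j : Fin r) : (σ (e j) : ℂ) ≠ 0 := Complex.ofReal_ne_zero.mpr (hpos _ j.isLt).ne'
  have hΩ : (Vᴴ * U).submatrix e e = diagonal fun j => (σ (e j) : ℂ)⁻¹ :=
    submatrix_eq_diagonal_inv_of_diagonal_mul_mul_diagonal_eq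
      ((isIdempotentElem_mul_mul_star_iff hU hV _).mp (hsvd ▸ hM)) (Fin.castLE_injective hr) hσ
  have hVrUr : (V.submatrix id e)ᴴ * U.submatrix id e = (Vᴴ * U).submatrix e e := by
    rw [conjTranspose_submatrix, submatrix_mul _ _ _ _ _ Function.bijective_id]
  refine ⟨fun j => ?_, ?_⟩
  · have hjj := congr_fun (congr_fun hΩ j) j
    simp only [submatrix_apply, diagonal_apply_eq, mul_apply, conjTranspose_apply] at hjj
    calc ∑ i, (starRingEnd ℂ) (U i (e j)) * V i (e j)
        = star (∑ i, star (V i (e j)) * U i (e j)) := by simp [mul_comm]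
      _ = (σ (e j) : ℂ)⁻¹ := by rw [hjj, ← Complex.ofReal_inv]; exact Complex.conj_ofReal _
  · rw [hVrUr, hΩ, eq_comm]
    refine inv_eq_right_inv ?_
    rw [diagonal_mul_diagonal]
    simp [hσ]

/-- For an idempotent matrix `M` of rank `r` with SVD `M = U Σ Vᴴ`,
the left and right singular vectors `u_j`, `v_j` associated with the nonzero
singular values satisfy `u_jᴴ v_j = σ_j⁻¹`; more precisely `Vrᴴ Ur = Ω⁻¹`. -/
theorem svd_idempotent_inner_products {n r : ℕ} (hr : r ≤ n)
    (M U V : Matrix (Fin n) (Fin n) ℂ) (σ : Fin n → ℝ)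
    (hM : M * M = M) (hrank : M.rank = r)
    (hU : U ∈ Matrix.unitaryGroup (Fin n) ℂ)
    (hV : V ∈ Matrix.unitaryGroup (Fin n) ℂ)
    (hdec : ∀ i j : Fin n, i ≤ j → σ j ≤ σ i)
    (hpos : ∀ i : Fin n, (i : ℕ) < r → 0 < σ i)
    (hzero : ∀ i : Fin n, r ≤ (i : ℕ) → σ i = 0)
    (hsvd : M = U * Matrix.diagonal (fun i => (σ i : ℂ)) * Vᴴ) :
    (∀ j : Fin r,
        (∑ i : Fin n, (starRingEnd ℂ) (U i (Fin.castLE hr j)) * V i (Fin.castLE hr j)) =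
          ((σ (Fin.castLE hr j) : ℂ))⁻¹) ∧
      (V.submatrix id (Fin.castLE hr))ᴴ * U.submatrix id (Fin.castLE hr) =
        (Matrix.diagonal (fun j : Fin r => (σ (Fin.castLE hr j) : ℂ)))⁻¹ :=
  svd_idempotent_inner_products_general hr M U V σ hM hU hV hpos hsvd
end

section
/- Every idempotent matrix M ∈ ℂ^{n×n} is unitarily similar to a real n×n block diagonal matrix N̂ = [[1, τ₁],[0, 0]] ⊕ ⋯ ⊕ [[1, τ_t],[0, 0]] ⊕ I_{r−t} ⊕ 0_{s−t}, where τ₁ ≥ τ₂ ≥ ⋯ ≥ τ_t > 0, r = rank(M), s = n − r, and t = rank(M) − dim(null(I − MM^H)). -/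
open Matrix Module Finset
open scoped InnerProductSpace

/-- The real `n × n` block diagonal matrix
`N̂ = [[1,τ₁],[0,0]] ⊕ ⋯ ⊕ [[1,τ_t],[0,0]] ⊕ I_{r-t} ⊕ 0_{s-t}`:
the `t` two-by-two blocks occupy the leading `2t` rows/columns, followed by an
identity block of size `r - t`, and zeros elsewhere. -/
noncomputable def hatN (n r t : ℕ) (τ : ℕ → ℝ) : Matrix (Fin n) (Fin n) ℝ :=
  Matrix.of fun i j =>
    if (i : ℕ) = (j : ℕ) ∧ (((i : ℕ) < 2 * t ∧ (i : ℕ) % 2 = 0) ∨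
        (2 * t ≤ (i : ℕ) ∧ (i : ℕ) < r + t)) then 1
    else if (i : ℕ) % 2 = 0 ∧ (i : ℕ) < 2 * t ∧ (j : ℕ) = (i : ℕ) + 1 then τ ((i : ℕ) / 2)
    else 0

/-- The dimension of the null space of `I - M Mᴴ`. -/
noncomputable def nullityOneSubMMH {n : ℕ} (M : Matrix (Fin n) (Fin n) ℂ) : ℕ :=
  Module.finrank ℂ (LinearMap.ker (Matrix.mulVecLin (1 - M * Mᴴ)))

lemma antitone_count {m : ℕ} (f : Fin m → ℝ) (hf : Antitone f) (j : Fin m) :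
    (j : ℕ) < (Finset.univ.filter fun i => 0 < f i).card ↔ 0 < f j := by
  constructor
  · intro h
    by_contra hc
    push_neg at hc
    have hsub : (Finset.univ.filter fun i => 0 < f i) ⊆ Finset.Iio j := by
      intro b hb
      simp only [Finset.mem_filter] at hb
      rcases lt_or_ge b j with h' | h'
      · exact Finset.mem_Iio.2 h'
      · exact absurd (lt_of_lt_of_le hb.2 (hf h')) (not_lt.2 hc)
    have := Finset.card_le_card hsub
    rw [Fin.card_Iio] at this
    omega
  · intro h
    have hsub : Finset.Iic j ⊆ Finset.univ.filter fun i => 0 < f i := by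
      intro b hb
      simp only [Finset.mem_filter, Finset.mem_univ, true_and]
      exact lt_of_lt_of_le h (hf (Finset.mem_Iic.1 hb))
    have := Finset.card_le_card hsub
    rw [Fin.card_Iic] at this
    omega

lemma aux_main {n : ℕ} {E : Type*} [NormedAddCommGroup E] [InnerProductSpace ℂ E]
    [FiniteDimensional ℂ E] (hE : finrank ℂ E = n)
    (T : E →ₗ[ℂ] E) (hTT : ∀ x, T (T x) = T x)
    (r s : ℕ) (hr : finrank ℂ (LinearMap.range T) = r) (hs : s = n - r) :
    ∃ (t' : ℕ) (τ : ℕ → ℝ) (v : Fin n → E),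
      Orthonormal ℂ v ∧ t' ≤ r ∧ t' ≤ s ∧
      (∀ j, j + 1 < t' → τ (j + 1) ≤ τ j) ∧ (∀ j, j < t' → 0 < τ j) ∧
      (∀ i j : Fin n, ⟪v i, T (v j)⟫_ℂ = (hatN n r t' τ i j : ℂ)) := by
  classical
  set R : Submodule ℂ E := LinearMap.range T with hRdef
  have hTid : ∀ x, x ∈ R → T x = x := by rintro x ⟨y, rfl⟩; exact hTT y
  have hrn : r ≤ n := hr ▸ hE ▸ Submodule.finrank_le R
  have hfinRp : finrank ℂ Rᗮ = s := by
    have h1 := Submodule.finrank_add_finrank_orthogonal R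
    omega
  have hrs : r + s = n := by omega
  -- the symmetric compression S on Rᗮ
  set S : Rᗮ →ₗ[ℂ] Rᗮ :=
    (Submodule.orthogonalProjection Rᗮ).toLinearMap ∘ₗ ((LinearMap.adjoint T) ∘ₗ (T ∘ₗ Rᗮ.subtype))
    with hSdef
  have hSinner : ∀ x y : Rᗮ, ⟪((S x : Rᗮ) : E), (y : E)⟫_ℂ = ⟪T (x : E), T (y : E)⟫_ℂ := by
    intro x y
    have h1 : S x = Submodule.orthogonalProjection Rᗮ ((LinearMap.adjoint T) (T (x : E))) := rfl
    rw [h1, ← Submodule.coe_inner,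
      Submodule.inner_orthogonalProjection_eq_of_mem_right, LinearMap.adjoint_inner_left]
  have hS : S.IsSymmetric := by
    intro x y
    have h2 : ⟪(x : E), ((S y : Rᗮ) : E)⟫_ℂ = ⟪T (x : E), T (y : E)⟫_ℂ := by
      rw [← inner_conj_symm, hSinner, inner_conj_symm]
    exact (hSinner x y).trans h2.symm
  -- sorted eigenbasis of S
  set σ : Equiv.Perm (Fin s) := Tuple.sort (fun i => (-(hS.eigenvalues hfinRp i) : ℝ)) with hσdef
  set μ : Fin s → ℝ := fun i => hS.eigenvalues hfinRp (σ i) with hμdef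
  set Qb : Fin s → Rᗮ := fun i => hS.eigenvectorBasis hfinRp (σ i) with hQdef
  have hQortho : Orthonormal ℂ Qb :=
    (hS.eigenvectorBasis hfinRp).orthonormal.comp σ σ.injective
  have hμanti : Antitone μ := by
    intro a b hab
    have := Tuple.monotone_sort (fun i => (-(hS.eigenvalues hfinRp i) : ℝ)) hab
    simpa [hμdef, hσdef] using this
  have hSQ : ∀ i, S (Qb i) = (μ i : ℂ) • Qb i := fun i =>
    hS.apply_eigenvectorBasis hfinRp (σ i)
  -- central identity
  have hTQ : ∀ a b : Fin s, ⟪T (Qb a : E), T (Qb b : E)⟫_ℂ =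
      if a = b then (μ a : ℂ) else 0 := by
    intro a b
    rw [← hSinner, hSQ, Submodule.coe_smul, inner_smul_left, ← Submodule.coe_inner,
      orthonormal_iff_ite.mp hQortho a b]
    simp only [Complex.star_def, Complex.conj_ofReal]
    split_ifs <;> ring
  -- nonnegativity / norm identity
  have hμnorm : ∀ a : Fin s, ‖T (Qb a : E)‖ ^ 2 = μ a := by
    intro a
    have h := hTQ a a
    rw [if_pos rfl] at h
    have h2 := inner_self_eq_norm_sq (𝕜 := ℂ) (T (Qb a : E))
    rw [h] at h2
    simpa using h2.symm
  have hμnn : ∀ a : Fin s, 0 ≤ μ a := by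
    intro a
    rw [← hμnorm a]; positivity
  have hTQ0 : ∀ a : Fin s, μ a = 0 → T (Qb a : E) = 0 := by
    intro a ha
    have h := hμnorm a
    rw [ha, pow_eq_zero_iff (two_ne_zero)] at h
    exact norm_eq_zero.mp h
  -- the count t'
  set t' : ℕ := (Finset.univ.filter fun i : Fin s => 0 < μ i).card with ht'def
  have hts : t' ≤ s := by
    have := Finset.card_filter_le (Finset.univ : Finset (Fin s)) (fun i : Fin s => 0 < μ i)
    simpa using this
  have htiff : ∀ a : Fin s, (a : ℕ) < t' ↔ 0 < μ a := fun a => antitone_count μ hμanti a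
  -- τ
  set τ : ℕ → ℝ := fun a => if h : a < s then Real.sqrt (μ ⟨a, h⟩) else 0 with hτdef
  have hτpos : ∀ j, j < t' → 0 < τ j := by
    intro j hj
    have hjs : j < s := lt_of_lt_of_le hj hts
    have : 0 < μ ⟨j, hjs⟩ := (htiff ⟨j, hjs⟩).mp hj
    simp only [hτdef, dif_pos hjs]
    exact Real.sqrt_pos.mpr this
  have hτanti : ∀ j, j + 1 < t' → τ (j + 1) ≤ τ j := by
    intro j hj
    have h1 : j + 1 < s := lt_of_lt_of_le hj hts
    have h2 : j < s := by omega
    simp only [hτdef, dif_pos h1, dif_pos h2]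
    exact Real.sqrt_le_sqrt (hμanti (by simp [Fin.le_def]))
  -- key inner product between normalized images
  have hkey : ∀ (a b : Fin s), (a : ℕ) < t' → (b : ℕ) < t' →
      ⟪((Real.sqrt (μ a) : ℂ))⁻¹ • T (Qb a : E), ((Real.sqrt (μ b) : ℂ))⁻¹ • T (Qb b : E)⟫_ℂ =
      if a = b then 1 else 0 := by
    intro a b ha hb
    have hμa : 0 < μ a := (htiff a).mp ha
    have hμb : 0 < μ b := (htiff b).mp hb
    rw [inner_smul_left, inner_smul_right, hTQ a b]
    split_ifs with h
    · subst h
      have hne : (Real.sqrt (μ a) : ℝ) ≠ 0 := ne_of_gt (Real.sqrt_pos.mpr hμa)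
      have hcne : ((Real.sqrt (μ a) : ℂ)) ≠ 0 := by exact_mod_cast hne
      rw [starRingEnd_apply, star_inv₀, Complex.star_def, Complex.conj_ofReal]
      field_simp
      rw [← Complex.ofReal_pow, Real.sq_sqrt hμa.le]
    · simp
  -- membership of the normalized images in R
  have hpmem : ∀ a : Fin s, ((Real.sqrt (μ a) : ℂ))⁻¹ • T (Qb a : E) ∈ R := by
    intro a
    exact Submodule.smul_mem _ _ (LinearMap.mem_range_self T _)
  -- t' ≤ r
  have htr : t' ≤ r := by
    have hON : Orthonormal ℂ (fun a : Fin t' =>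
        (⟨((Real.sqrt (μ ⟨a, lt_of_lt_of_le a.2 hts⟩) : ℂ))⁻¹ •
          T (Qb ⟨a, lt_of_lt_of_le a.2 hts⟩ : E), hpmem _⟩ : R)) := by
      rw [orthonormal_iff_ite]
      intro a b
      rw [Submodule.coe_inner]
      rw [hkey ⟨a, lt_of_lt_of_le a.2 hts⟩ ⟨b, lt_of_lt_of_le b.2 hts⟩ a.2 b.2]
      by_cases h : a = b
      · subst h; simp
      · rw [if_neg (by simpa [Fin.ext_iff] using h), if_neg h]
    have := hON.linearIndependent.fintype_card_le_finrank
    simpa [hr] using this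
  -- the extended orthonormal basis of R
  have hexists : ∃ Pb : OrthonormalBasis (Fin r) ℂ R, ∀ a : Fin r, (ha : (a : ℕ) < t') →
      Pb a = (⟨((Real.sqrt (μ ⟨a, lt_of_lt_of_le ha hts⟩) : ℂ))⁻¹ •
        T (Qb ⟨a, lt_of_lt_of_le ha hts⟩ : E), hpmem _⟩ : R) := by
    classical
    set pR : Fin r → R := fun a =>
      if ha : (a : ℕ) < t' then
        (⟨((Real.sqrt (μ ⟨a, lt_of_lt_of_le ha hts⟩) : ℂ))⁻¹ •
          T (Qb ⟨a, lt_of_lt_of_le ha hts⟩ : E), hpmem _⟩ : R)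
      else 0 with hpRdef
    have hON : Orthonormal ℂ (Set.restrict {a : Fin r | (a : ℕ) < t'} pR) := by
      rw [orthonormal_iff_ite]
      rintro ⟨a, ha⟩ ⟨b, hb⟩
      have ha' : (a : ℕ) < t' := ha
      have hb' : (b : ℕ) < t' := hb
      simp only [Set.restrict, Set.domRestrict_apply, hpRdef, dif_pos ha', dif_pos hb']
      rw [Submodule.coe_inner, hkey _ _ ha' hb']
      by_cases h : a = b
      · subst h; simp
      · rw [if_neg (by simpa [Fin.ext_iff] using h), if_neg (by simpa [Subtype.ext_iff] using h)]
    obtain ⟨Pb, hPb⟩ := hON.exists_orthonormalBasis_extension_of_card_eq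
      (by simp [hr]) (v := pR)
    refine ⟨Pb, fun a ha => ?_⟩
    rw [hPb a ha, hpRdef]
    simp only [dif_pos ha]
  obtain ⟨Pb, hPb⟩ := hexists
  -- action of T on the basis vectors
  have hTP : ∀ a : Fin r, T ((Pb a : E)) = (Pb a : E) := fun a => hTid _ (Pb a).2
  have hTQP : ∀ (b : Fin s) (hb : (b : ℕ) < t'),
      T (Qb b : E) = (Real.sqrt (μ b) : ℂ) • ((Pb ⟨(b : ℕ), lt_of_lt_of_le hb htr⟩ : E)) := by
    intro b hb
    have h1 := hPb ⟨(b : ℕ), lt_of_lt_of_le hb htr⟩ hb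
    have h2 : ((Pb ⟨(b : ℕ), lt_of_lt_of_le hb htr⟩ : R) : E) =
        ((Real.sqrt (μ b) : ℂ))⁻¹ • T (Qb b : E) := by
      rw [h1]
    rw [h2, smul_smul]
    have hμb : 0 < μ b := (htiff b).mp hb
    have hne : ((Real.sqrt (μ b) : ℂ)) ≠ 0 := by
      exact_mod_cast ne_of_gt (Real.sqrt_pos.mpr hμb)
    rw [mul_inv_cancel₀ hne, one_smul]
  have hTQ0' : ∀ (b : Fin s), t' ≤ (b : ℕ) → T (Qb b : E) = 0 := by
    intro b hb
    refine hTQ0 b ?_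
    have := (htiff b).not
    push_neg at this
    exact le_antisymm (this.mp hb) (hμnn b)
  -- inner products between the two families
  set PE : Fin r → E := fun a => ((Pb a : R) : E) with hPEdef
  set QE : Fin s → E := fun b => ((Qb b : Rᗮ) : E) with hQEdef
  have hPP : ∀ a b : Fin r, ⟪PE a, PE b⟫_ℂ = if a = b then 1 else 0 := by
    intro a b
    rw [hPEdef, ← Submodule.coe_inner, orthonormal_iff_ite.mp Pb.orthonormal a b]
  have hQQ : ∀ a b : Fin s, ⟪QE a, QE b⟫_ℂ = if a = b then 1 else 0 := by
    intro a b
    rw [hQEdef, ← Submodule.coe_inner, orthonormal_iff_ite.mp hQortho a b]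
  have hPQ : ∀ (a : Fin r) (b : Fin s), ⟪PE a, QE b⟫_ℂ = 0 := fun a b =>
    Submodule.inner_right_of_mem_orthogonal (Pb a).2 (Qb b).2
  have hQP : ∀ (b : Fin s) (a : Fin r), ⟪QE b, PE a⟫_ℂ = 0 := fun b a =>
    Submodule.inner_left_of_mem_orthogonal (Pb a).2 (Qb b).2
  have hWW : ∀ x y : Fin r ⊕ Fin s,
      ⟪Sum.elim PE QE x, Sum.elim PE QE y⟫_ℂ = if x = y then 1 else 0 := by
    rintro (a | b) (c | d)
    · rw [Sum.elim_inl, Sum.elim_inl, hPP]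
      by_cases h : a = c
      · subst h; simp
      · rw [if_neg h, if_neg (by simp [h])]
    · rw [Sum.elim_inl, Sum.elim_inr, hPQ, if_neg (by simp)]
    · rw [Sum.elim_inr, Sum.elim_inl, hQP, if_neg (by simp)]
    · rw [Sum.elim_inr, Sum.elim_inr, hQQ]
      by_cases h : b = d
      · subst h; simp
      · rw [if_neg h, if_neg (by simp [h])]
  -- the index decoding and the final family
  set ind : Fin n → (Fin r ⊕ Fin s) := fun i =>
    if h1 : (i : ℕ) < 2 * t' then
      (if (i : ℕ) % 2 = 0 then Sum.inl ⟨(i : ℕ) / 2, by omega⟩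
       else Sum.inr ⟨(i : ℕ) / 2, by omega⟩)
    else if h2 : (i : ℕ) < r + t' then Sum.inl ⟨(i : ℕ) - t', by omega⟩
    else Sum.inr ⟨(i : ℕ) - r, by omega⟩ with hinddef
  have hind1 : ∀ (i : Fin n) (h : (i : ℕ) < 2 * t'), (i : ℕ) % 2 = 0 →
      ind i = Sum.inl ⟨(i : ℕ) / 2, by omega⟩ := by
    intro i h he
    simp only [hinddef]
    rw [dif_pos h, if_pos he]
  have hind2 : ∀ (i : Fin n) (h : (i : ℕ) < 2 * t'), (i : ℕ) % 2 ≠ 0 →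
      ind i = Sum.inr ⟨(i : ℕ) / 2, by omega⟩ := by
    intro i h he
    simp only [hinddef]
    rw [dif_pos h, if_neg he]
  have hind3 : ∀ (i : Fin n) (h1 : ¬ (i : ℕ) < 2 * t') (h2 : (i : ℕ) < r + t'),
      ind i = Sum.inl ⟨(i : ℕ) - t', by omega⟩ := by
    intro i h1 h2
    simp only [hinddef]
    rw [dif_neg h1, dif_pos h2]
  have hind4 : ∀ (i : Fin n) (h1 : ¬ (i : ℕ) < 2 * t') (h2 : ¬ (i : ℕ) < r + t'),
      ind i = Sum.inr ⟨(i : ℕ) - r, by omega⟩ := by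
    intro i h1 h2
    simp only [hinddef]
    rw [dif_neg h1, dif_neg h2]
  set enc : (Fin r ⊕ Fin s) → ℕ := fun x =>
    Sum.elim (fun a : Fin r => if (a : ℕ) < t' then 2 * (a : ℕ) else (a : ℕ) + t')
      (fun b : Fin s => if (b : ℕ) < t' then 2 * (b : ℕ) + 1 else (b : ℕ) + r) x with hencdef
  have henc : ∀ i : Fin n, enc (ind i) = (i : ℕ) := by
    intro i
    by_cases h1 : (i : ℕ) < 2 * t'
    · by_cases he : (i : ℕ) % 2 = 0
      · rw [hind1 i h1 he, hencdef]
        simp only [Sum.elim_inl]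
        rw [if_pos (show ((⟨(i : ℕ) / 2, by omega⟩ : Fin r) : ℕ) < t' by simp; omega)]
        omega
      · rw [hind2 i h1 he, hencdef]
        simp only [Sum.elim_inr]
        rw [if_pos (show ((⟨(i : ℕ) / 2, by omega⟩ : Fin s) : ℕ) < t' by simp; omega)]
        omega
    · by_cases h2 : (i : ℕ) < r + t'
      · rw [hind3 i h1 h2, hencdef]
        simp only [Sum.elim_inl]
        rw [if_neg (show ¬ ((⟨(i : ℕ) - t', by omega⟩ : Fin r) : ℕ) < t' by simp; omega)]
        omega
      · rw [hind4 i h1 h2, hencdef]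
        simp only [Sum.elim_inr]
        rw [if_neg (show ¬ ((⟨(i : ℕ) - r, by omega⟩ : Fin s) : ℕ) < t' by simp; omega)]
        omega
  have hind_inj : Function.Injective ind := fun i j h =>
    Fin.ext (by rw [← henc i, ← henc j, h])
  set v : Fin n → E := fun i => Sum.elim PE QE (ind i) with hvdef
  have hvv : ∀ i j : Fin n, ⟪v i, v j⟫_ℂ = if i = j then 1 else 0 := by
    intro i j
    rw [hvdef]
    simp only
    rw [hWW]
    by_cases h : i = j
    · subst h; simp
    · rw [if_neg (fun hc => h (hind_inj hc)), if_neg h]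
  have hvON : Orthonormal ℂ v := orthonormal_iff_ite.mpr hvv
  have hvW : ∀ (i : Fin n) (x : Fin r ⊕ Fin s),
      ⟪v i, Sum.elim PE QE x⟫_ℂ = if ind i = x then 1 else 0 := fun i x => hWW (ind i) x
  have hTPE : ∀ a : Fin r, T (PE a) = PE a := fun a => hTid _ (Pb a).2
  refine ⟨t', τ, v, hvON, htr, hts, hτanti, hτpos, ?_⟩
  intro i j
  by_cases h1 : (j : ℕ) < 2 * t'
  · by_cases he : (j : ℕ) % 2 = 0
    · -- column of a "P" vector in the 2x2 block region
      have hTvj : T (v j) = v j := by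
        have hvj : v j = PE ⟨(j : ℕ) / 2, by omega⟩ := by
          rw [hvdef]; simp only; rw [hind1 j h1 he, Sum.elim_inl]
        rw [hvj, hTPE]
      rw [hTvj, hvv i j]
      have hval : hatN n r t' τ i j = if i = j then (1 : ℝ) else 0 := by
        simp only [hatN, Matrix.of_apply]
        by_cases h : i = j
        · subst h
          rw [if_pos ⟨rfl, Or.inl ⟨h1, he⟩⟩, if_pos rfl]
        · rw [if_neg, if_neg, if_neg h]
          · rintro ⟨hc1, hc2, hc3⟩; omega
          · rintro ⟨hc, -⟩; exact h (Fin.ext hc)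
      rw [hval, apply_ite Complex.ofReal, Complex.ofReal_one, Complex.ofReal_zero]
    · -- column of a "Q" vector in the 2x2 block region
      have hjs : (j : ℕ) / 2 < t' := by omega
      have hvj : v j = QE ⟨(j : ℕ) / 2, by omega⟩ := by
        rw [hvdef]; simp only; rw [hind2 j h1 he, Sum.elim_inr]
      have hτval : τ ((j : ℕ) / 2) = Real.sqrt (μ ⟨(j : ℕ) / 2, by omega⟩) := by
        simp only [hτdef]
        rw [dif_pos (show (j : ℕ) / 2 < s by omega)]
      have hTvj : T (v j) = (τ ((j : ℕ) / 2) : ℂ) •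
          PE ⟨(j : ℕ) / 2, lt_of_lt_of_le hjs htr⟩ := by
        rw [hvj, hQEdef]
        simp only
        rw [hTQP ⟨(j : ℕ) / 2, by omega⟩ hjs, hτval]
      rw [hTvj, inner_smul_right, ← Sum.elim_inl PE QE ⟨(j : ℕ) / 2, lt_of_lt_of_le hjs htr⟩,
        hvW i (Sum.inl ⟨(j : ℕ) / 2, lt_of_lt_of_le hjs htr⟩)]
      by_cases hc : ind i = Sum.inl ⟨(j : ℕ) / 2, lt_of_lt_of_le hjs htr⟩
      · have hi : (i : ℕ) = 2 * ((j : ℕ) / 2) := by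
          rw [← henc i, hc, hencdef]
          simp only [Sum.elim_inl]
          rw [if_pos (by simpa using hjs)]
        have hval : hatN n r t' τ i j = τ ((j : ℕ) / 2) := by
          simp only [hatN, Matrix.of_apply]
          rw [if_neg, if_pos ⟨by omega, by omega, by omega⟩]
          · congr 1; omega
          · rintro ⟨hd, -⟩; omega
        rw [hval, if_pos hc, mul_one]
      · have hval : hatN n r t' τ i j = 0 := by
          simp only [hatN, Matrix.of_apply]
          rw [if_neg, if_neg]
          · rintro ⟨hc1, hc2, hc3⟩
            apply hc
            rw [hind1 i hc2 hc1]
            congr 1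
            exact Fin.ext (by simp; omega)
          · rintro ⟨hd, hor⟩
            rcases hor with ⟨h5, h6⟩ | ⟨h5, h6⟩ <;> omega
        rw [hval, if_neg hc, mul_zero, Complex.ofReal_zero]
  · by_cases h2 : (j : ℕ) < r + t'
    · -- column of a "P" vector in the identity block
      have hTvj : T (v j) = v j := by
        have hvj : v j = PE ⟨(j : ℕ) - t', by omega⟩ := by
          rw [hvdef]; simp only; rw [hind3 j h1 h2, Sum.elim_inl]
        rw [hvj, hTPE]
      rw [hTvj, hvv i j]
      have hval : hatN n r t' τ i j = if i = j then (1 : ℝ) else 0 := by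
        simp only [hatN, Matrix.of_apply]
        by_cases h : i = j
        · subst h
          rw [if_pos ⟨rfl, Or.inr ⟨by omega, h2⟩⟩, if_pos rfl]
        · rw [if_neg, if_neg, if_neg h]
          · rintro ⟨hc1, hc2, hc3⟩; omega
          · rintro ⟨hc, -⟩; exact h (Fin.ext hc)
      rw [hval, apply_ite Complex.ofReal, Complex.ofReal_one, Complex.ofReal_zero]
    · -- column of a "Q" vector in the zero block
      have hTvj : T (v j) = 0 := by
        have hvj : v j = QE ⟨(j : ℕ) - r, by omega⟩ := by
          rw [hvdef]; simp only; rw [hind4 j h1 h2, Sum.elim_inr]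
        rw [hvj, hQEdef]
        simp only
        exact hTQ0' ⟨(j : ℕ) - r, by omega⟩ (by simp; omega)
      rw [hTvj, inner_zero_right]
      have hval : hatN n r t' τ i j = 0 := by
        simp only [hatN, Matrix.of_apply]
        rw [if_neg, if_neg]
        · rintro ⟨hc1, hc2, hc3⟩; omega
        · rintro ⟨hd, hor⟩
          rcases hor with ⟨h5, h6⟩ | ⟨h5, h6⟩ <;> omega
      rw [hval, Complex.ofReal_zero]

lemma hatN_row (n r t : ℕ) (τ : ℕ → ℝ) (j k : Fin n) :
    hatN n r t τ j k =
      (if (j : ℕ) = (k : ℕ) then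
        (if ((j : ℕ) < 2 * t ∧ (j : ℕ) % 2 = 0) ∨ (2 * t ≤ (j : ℕ) ∧ (j : ℕ) < r + t)
          then (1 : ℝ) else 0) else 0)
      + (if (k : ℕ) = (j : ℕ) + 1 then
        (if (j : ℕ) % 2 = 0 ∧ (j : ℕ) < 2 * t then τ ((j : ℕ) / 2) else 0) else 0) := by
  simp only [hatN, Matrix.of_apply]
  split_ifs <;> first | ring1 | (exfalso; omega)

lemma hatN_mul_transpose (n r t : ℕ) (τ : ℕ → ℝ) (h2t : 2 * t ≤ n) :
    hatN n r t τ * (hatN n r t τ)ᵀ = Matrix.diagonal (fun i : Fin n =>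
      (if ((i : ℕ) < 2 * t ∧ (i : ℕ) % 2 = 0) ∨ (2 * t ≤ (i : ℕ) ∧ (i : ℕ) < r + t)
        then (1 : ℝ) else 0)
      + (if (i : ℕ) % 2 = 0 ∧ (i : ℕ) < 2 * t then τ ((i : ℕ) / 2) ^ 2 else 0)) := by
  ext i j
  rw [Matrix.mul_apply]
  simp only [Matrix.transpose_apply]
  set A : Fin n → ℝ := fun j => if ((j : ℕ) < 2 * t ∧ (j : ℕ) % 2 = 0) ∨
    (2 * t ≤ (j : ℕ) ∧ (j : ℕ) < r + t) then (1 : ℝ) else 0 with hA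
  set B : Fin n → ℝ := fun j => if (j : ℕ) % 2 = 0 ∧ (j : ℕ) < 2 * t then τ ((j : ℕ) / 2)
    else 0 with hB
  have hrow : ∀ a k : Fin n, hatN n r t τ a k = (if (a : ℕ) = (k : ℕ) then A a else 0)
      + (if (k : ℕ) = (a : ℕ) + 1 then B a else 0) := fun a k => hatN_row n r t τ a k
  calc ∑ k, hatN n r t τ i k * hatN n r t τ j k
      = (∑ k, hatN n r t τ i k * (if (j : ℕ) = (k : ℕ) then A j else 0))
        + (∑ k, hatN n r t τ i k * (if (k : ℕ) = (j : ℕ) + 1 then B j else 0)) := by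
        rw [← Finset.sum_add_distrib]
        refine Finset.sum_congr rfl fun k _ => ?_
        rw [hrow j k, mul_add]
    _ = hatN n r t τ i j * A j
        + (∑ k, hatN n r t τ i k * (if (k : ℕ) = (j : ℕ) + 1 then B j else 0)) := by
        congr 1
        rw [show (∑ k, hatN n r t τ i k * (if (j : ℕ) = (k : ℕ) then A j else 0))
          = ∑ k, (if j = k then hatN n r t τ i k * A j else 0) from
          Finset.sum_congr rfl fun k _ => by
            by_cases h : j = k
            · rw [if_pos h, if_pos (by rw [h])]
            · rw [if_neg h, if_neg (fun hc => h (Fin.ext hc)), mul_zero]]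
        rw [Finset.sum_ite_eq]
        simp
    _ = Matrix.diagonal (fun i : Fin n => A i + (if (i : ℕ) % 2 = 0 ∧ (i : ℕ) < 2 * t
          then τ ((i : ℕ) / 2) ^ 2 else 0)) i j := by
        by_cases hj : (j : ℕ) + 1 < n
        · rw [show (∑ k, hatN n r t τ i k * (if (k : ℕ) = (j : ℕ) + 1 then B j else 0))
            = ∑ k, (if (⟨(j : ℕ) + 1, hj⟩ : Fin n) = k then hatN n r t τ i k * B j else 0) from
            Finset.sum_congr rfl fun k _ => by
              by_cases h : (k : ℕ) = (j : ℕ) + 1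
              · rw [if_pos h, if_pos (Fin.ext h.symm)]
              · rw [if_neg h, if_neg (fun hc => h (by rw [← hc])), mul_zero]]
          rw [Finset.sum_ite_eq]
          simp only [Finset.mem_univ, if_true]
          by_cases hij : i = j
          · subst hij
            rw [Matrix.diagonal_apply_eq, hrow i i, hrow i ⟨(i : ℕ) + 1, hj⟩]
            simp only [hA, hB, Fin.val_mk]
            split_ifs <;> first | ring1 | (exfalso; omega)
          · have hij' : (i : ℕ) ≠ (j : ℕ) := fun hc => hij (Fin.ext hc)
            rw [Matrix.diagonal_apply_ne _ hij, hrow i j, hrow i ⟨(j : ℕ) + 1, hj⟩]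
            simp only [hA, hB, Fin.val_mk]
            split_ifs <;> first | ring1 | (exfalso; omega)
        · rw [Finset.sum_eq_zero (fun k _ => by
            rw [if_neg (show ¬ (k : ℕ) = (j : ℕ) + 1 by omega), mul_zero]), add_zero]
          by_cases hij : i = j
          · subst hij
            rw [Matrix.diagonal_apply_eq, hrow i i]
            simp only [hA, hB]
            split_ifs <;> first | ring1 | (exfalso; omega)
          · have hij' : (i : ℕ) ≠ (j : ℕ) := fun hc => hij (Fin.ext hc)
            rw [Matrix.diagonal_apply_ne _ hij, hrow i j]
            simp only [hA, hB]
            split_ifs <;> first | ring1 | (exfalso; omega)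

lemma card_filter_fin (n a b : ℕ) (hb : b ≤ n) (hab : a ≤ b) :
    (Finset.univ.filter fun i : Fin n => a ≤ (i : ℕ) ∧ (i : ℕ) < b).card = b - a := by
  rw [← Nat.card_Ico a b]
  refine Finset.card_bij' (fun i _ => (i : ℕ)) (fun x hx => (⟨x, by
    rw [Finset.mem_Ico] at hx; omega⟩ : Fin n)) ?_ ?_ ?_ ?_
  · intro i hi
    simp only [Finset.mem_filter] at hi
    rw [Finset.mem_Ico]; exact hi.2
  · intro x hx
    rw [Finset.mem_Ico] at hx
    simp only [Finset.mem_filter, Finset.mem_univ, true_and]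
    exact ⟨hx.1, hx.2⟩
  · intro i hi; exact Fin.ext rfl
  · intro x hx; rfl


/-- Every idempotent matrix `M ∈ ℂ^{n×n}` is unitarily similar to a real
block diagonal matrix `N̂ = [[1,τ₁],[0,0]] ⊕ ⋯ ⊕ [[1,τ_t],[0,0]] ⊕ I_{r-t} ⊕ 0_{s-t}` with
`τ₁ ≥ ⋯ ≥ τ_t > 0`, `r = rank M`, `s = n - r`, `t = rank M - dim null(I - M Mᴴ)`. -/
theorem idempotent_unitarily_similar_blockdiag {n : ℕ}
    (M : Matrix (Fin n) (Fin n) ℂ) (hM : M * M = M)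
    (r s t : ℕ) (hr : r = M.rank) (hs : s = n - r)
    (ht : t = M.rank - nullityOneSubMMH M) :
    ∃ (τ : ℕ → ℝ) (W : Matrix (Fin n) (Fin n) ℂ),
      W ∈ Matrix.unitaryGroup (Fin n) ℂ ∧
      (∀ j, j + 1 < t → τ (j + 1) ≤ τ j) ∧
      (∀ j, j < t → 0 < τ j) ∧
      M = W * (hatN n r t τ).map Complex.ofReal * Wᴴ := by
  classical
  have hTT : ∀ x : EuclideanSpace ℂ (Fin n),
      (Matrix.toEuclideanLin M) ((Matrix.toEuclideanLin M) x) = (Matrix.toEuclideanLin M) x := by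
    intro x
    simp only [Matrix.toEuclideanLin_apply, WithLp.ofLp_toLp]
    rw [Matrix.mulVec_mulVec, hM]
  have hrank : finrank ℂ (LinearMap.range (Matrix.toEuclideanLin M)) = r :=
    (hr.trans (Matrix.rank_eq_finrank_range_toLin M (PiLp.basisFun 2 ℂ (Fin n)) (PiLp.basisFun 2 ℂ (Fin n)))).symm
  obtain ⟨t', τ, v, hON, htr, hts, hτanti, hτpos, htable⟩ :=
    aux_main (finrank_euclideanSpace_fin) (Matrix.toEuclideanLin M) hTT r s hrank hs
  have hrn : r ≤ n := by
    rw [hr]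
    calc M.rank ≤ Fintype.card (Fin n) := M.rank_le_card_width
      _ = n := by simp
  have hrs : r + s = n := by omega
  set W : Matrix (Fin n) (Fin n) ℂ := Matrix.of fun k i => v i k with hWdef
  set Nc : Matrix (Fin n) (Fin n) ℂ := (hatN n r t' τ).map Complex.ofReal with hNcdef
  -- unitarity
  have hWHW : Wᴴ * W = 1 := by
    ext i j
    have h1 : (Wᴴ * W) i j = ∑ k, star (v i k) * v j k := by
      rw [Matrix.mul_apply]
      refine Finset.sum_congr rfl fun k _ => ?_
      rw [Matrix.conjTranspose_apply, hWdef]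
      rfl
    have h2 : (∑ k, star (v i k) * v j k) = ⟪v i, v j⟫_ℂ := by
      rw [PiLp.inner_apply]; simp [mul_comm]
    rw [h1, h2, orthonormal_iff_ite.mp hON i j, Matrix.one_apply]
  have hWWH : W * Wᴴ = 1 := mul_eq_one_comm.mp hWHW
  have hWmem : W ∈ Matrix.unitaryGroup (Fin n) ℂ := by
    rw [Matrix.mem_unitaryGroup_iff]
    rw [Matrix.star_eq_conjTranspose]
    exact hWWH
  -- the conjugation identity
  have hkey : Wᴴ * M * W = Nc := by
    ext i j
    have h1 : (Wᴴ * M * W) i j = ∑ k, ∑ l, star (v i k) * M k l * v j l := by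
      rw [Matrix.mul_apply]
      rw [Finset.sum_comm]
      refine Finset.sum_congr rfl fun l _ => ?_
      rw [Matrix.mul_apply, Finset.sum_mul]
      refine Finset.sum_congr rfl fun k _ => ?_
      rw [Matrix.conjTranspose_apply, hWdef]
      rfl
    have h2 : ⟪v i, (Matrix.toEuclideanLin M) (v j)⟫_ℂ
        = ∑ k, ∑ l, star (v i k) * M k l * v j l := by
      have h3 : ⟪v i, (Matrix.toEuclideanLin M) (v j)⟫_ℂ
          = ∑ k, star (v i k) * (M.mulVec (v j) k) := by
        rw [PiLp.inner_apply]; simp [mul_comm]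
      rw [h3]
      refine Finset.sum_congr rfl fun k _ => ?_
      rw [show M.mulVec (v j) k = ∑ l, M k l * v j l from rfl, Finset.mul_sum]
      refine Finset.sum_congr rfl fun l _ => ?_
      ring
    rw [h1, ← h2, htable i j, hNcdef, Matrix.map_apply]
  have hMW : M = W * Nc * Wᴴ := by
    calc M = 1 * M * 1 := by rw [one_mul, mul_one]
    _ = (W * Wᴴ) * M * (W * Wᴴ) := by rw [hWWH]
    _ = W * (Wᴴ * M * W) * Wᴴ := by simp only [Matrix.mul_assoc]
    _ = W * Nc * Wᴴ := by rw [hkey]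
  -- the nullity computation
  have hnull : nullityOneSubMMH M = r - t' := by
    have hMH : Mᴴ = W * Ncᴴ * Wᴴ := by
      rw [hMW, Matrix.conjTranspose_mul, Matrix.conjTranspose_mul,
        Matrix.conjTranspose_conjTranspose]
      simp only [Matrix.mul_assoc]
    have hMMH : M * Mᴴ = W * (Nc * Ncᴴ) * Wᴴ := by
      rw [hMH, hMW]
      calc W * Nc * Wᴴ * (W * Ncᴴ * Wᴴ)
          = W * (Nc * ((Wᴴ * W) * (Ncᴴ * Wᴴ))) := by simp only [Matrix.mul_assoc]
        _ = W * (Nc * Ncᴴ) * Wᴴ := by rw [hWHW, one_mul]; simp only [Matrix.mul_assoc]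
    have hsub : 1 - M * Mᴴ = W * (1 - Nc * Ncᴴ) * Wᴴ := by
      rw [Matrix.mul_sub, Matrix.sub_mul, Matrix.mul_one, hWWH, hMMH]
    set e : Fin n → ℂ := fun i => 1 - Complex.ofReal
        ((if ((i : ℕ) < 2 * t' ∧ (i : ℕ) % 2 = 0) ∨ (2 * t' ≤ (i : ℕ) ∧ (i : ℕ) < r + t')
          then (1 : ℝ) else 0)
         + (if (i : ℕ) % 2 = 0 ∧ (i : ℕ) < 2 * t' then τ ((i : ℕ) / 2) ^ 2 else 0)) with hedef
    have hdiag : 1 - Nc * Ncᴴ = Matrix.diagonal e := by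
      have hNcH : Ncᴴ = ((hatN n r t' τ)ᵀ).map Complex.ofReal := by
        ext a b
        simp [Matrix.conjTranspose_apply, Matrix.map_apply, Complex.conj_ofReal, hNcdef]
      have hmm : Nc * Ncᴴ = ((hatN n r t' τ) * (hatN n r t' τ)ᵀ).map
          (Complex.ofRealHom : ℝ →+* ℂ) := by
        rw [hNcdef, hNcH, Matrix.map_mul]
        rfl
      rw [hmm, hatN_mul_transpose n r t' τ (by omega),
        Matrix.diagonal_map (by simp), ← Matrix.diagonal_one, Matrix.diagonal_sub]
      rfl
    have hdetW : IsUnit W.det := Matrix.isUnit_det_of_right_inverse hWWH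
    have hdetWH : IsUnit Wᴴ.det := Matrix.isUnit_det_of_left_inverse hWWH
    have hrankMMH : (1 - M * Mᴴ).rank = (1 - Nc * Ncᴴ).rank := by
      rw [hsub, Matrix.rank_mul_eq_left_of_isUnit_det Wᴴ _ hdetWH,
        Matrix.rank_mul_eq_right_of_isUnit_det W _ hdetW]
    have hcard : Fintype.card {i // e i ≠ 0} = n - (r - t') := by
      rw [Fintype.card_subtype]
      have hfe : (Finset.univ.filter fun i => e i ≠ 0)
          = Finset.univ.filter fun i : Fin n => ¬(2 * t' ≤ (i : ℕ) ∧ (i : ℕ) < r + t') := by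
        apply Finset.filter_congr
        intro i _
        rw [hedef]
        simp only
        rw [ne_eq, sub_eq_zero, not_iff_not, eq_comm, Complex.ofReal_eq_one]
        by_cases h1 : (i : ℕ) < 2 * t'
        · by_cases he : (i : ℕ) % 2 = 0
          · rw [if_pos (Or.inl ⟨h1, he⟩), if_pos ⟨he, h1⟩]
            refine iff_of_false ?_ (by omega)
            have hp := hτpos ((i : ℕ) / 2) (by omega)
            intro heq
            nlinarith
          · rw [if_neg (by omega), if_neg (by omega)]
            exact iff_of_false (by norm_num) (by omega)
        · by_cases h2 : (i : ℕ) < r + t'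
          · rw [if_pos (Or.inr ⟨by omega, h2⟩), if_neg (by omega)]
            exact iff_of_true (by norm_num) ⟨by omega, h2⟩
          · rw [if_neg (by omega), if_neg (by omega)]
            exact iff_of_false (by norm_num) (by omega)
      rw [hfe, Finset.filter_not, Finset.card_sdiff_of_subset (Finset.filter_subset _ _),
        card_filter_fin n (2 * t') (r + t') (by omega) (by omega), Finset.card_univ,
        Fintype.card_fin]
      omega
    have hrank1 : (1 - M * Mᴴ).rank = n - (r - t') := by
      rw [hrankMMH, hdiag, Matrix.rank_diagonal, hcard]
    have hrn2 : (1 - M * Mᴴ).rank + finrank ℂ (LinearMap.ker (1 - M * Mᴴ).mulVecLin) = n := by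
      have := LinearMap.finrank_range_add_finrank_ker (1 - M * Mᴴ).mulVecLin
      rw [Module.finrank_fintype_fun_eq_card, Fintype.card_fin] at this
      rw [Matrix.rank]
      exact this
    rw [nullityOneSubMMH]
    omega
  have htt' : t = t' := by
    rw [ht, hnull, ← hr]
    omega
  rw [htt']
  exact ⟨τ, W, hWmem, hτanti, hτpos, hMW⟩
end

section
/- Let M ∈ ℂ^{n×n} be an idempotent matrix of rank r and set t = rank(M) − dim(null(I − MM^H)). Then, counting with multiplicity, M has exactly t singular values strictly greater than 1, exactly r − t singular values equal to 1, and exactly n − r singular values equal to 0. -/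
open Matrix

/-- The singular values of a square complex matrix `A`, as a multiset. -/
noncomputable def singularValues {n : ℕ} (A : Matrix (Fin n) (Fin n) ℂ) : Multiset ℝ :=
  Multiset.map (fun i => Real.sqrt ((Matrix.isHermitian_mul_conjTranspose_self A).eigenvalues i))
    Finset.univ.val

section AuxLemmas

-- helper: dot product of star with itself
lemma dot_star_self_eq {n : ℕ} (x : Fin n → ℂ) :
    star x ⬝ᵥ x = ((∑ j, Complex.normSq (x j) : ℝ) : ℂ) := by
  simp [dotProduct, Complex.normSq_eq_conj_mul_self]

-- trichotomy lemma
lemma eigs_zero_or_one_le {n : ℕ} (M : Matrix (Fin n) (Fin n) ℂ) (hM : M * M = M) (i : Fin n) :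
    (Matrix.isHermitian_mul_conjTranspose_self M).eigenvalues i = 0 ∨
      1 ≤ (Matrix.isHermitian_mul_conjTranspose_self M).eigenvalues i := by
  set hA := Matrix.isHermitian_mul_conjTranspose_self M with hAdef
  set μ : ℝ := hA.eigenvalues i with hμ
  by_cases h0 : μ = 0
  · exact Or.inl h0
  right
  set v : Fin n → ℂ := ⇑(hA.eigenvectorBasis i) with hv
  have hvne : v ≠ 0 := by
    have := hA.eigenvectorBasis.orthonormal.ne_zero i
    intro h
    apply this
    ext j
    exact congrFun h j
  have heig : (M * Mᴴ) *ᵥ v = (μ : ℂ) • v := by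
    have := hA.mulVec_eigenvectorBasis i
    rw [RCLike.real_smul_eq_coe_smul (K := ℂ)] at this
    exact this
  have hμC : (μ : ℂ) ≠ 0 := by exact_mod_cast h0
  have hMv : M *ᵥ v = v := by
    have h1 : (μ : ℂ) • (M *ᵥ v) = (μ : ℂ) • v := by
      calc (μ : ℂ) • (M *ᵥ v) = M *ᵥ ((μ : ℂ) • v) := by rw [mulVec_smul]
        _ = M *ᵥ ((M * Mᴴ) *ᵥ v) := by rw [heig]
        _ = (M * (M * Mᴴ)) *ᵥ v := by rw [mulVec_mulVec]
        _ = (M * Mᴴ) *ᵥ v := by rw [← Matrix.mul_assoc, hM]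
        _ = (μ : ℂ) • v := heig
    exact smul_right_injective _ hμC h1
  set w : Fin n → ℂ := Mᴴ *ᵥ v with hw
  set c : ℂ := star v ⬝ᵥ v with hc
  have hsw : star w = star v ᵥ* M := by
    rw [hw, star_mulVec, conjTranspose_conjTranspose]
  have hww : star w ⬝ᵥ w = (μ : ℂ) * c := by
    rw [hsw, ← dotProduct_mulVec, hw, mulVec_mulVec, heig, dotProduct_smul, smul_eq_mul, hc]
  have hwv : star w ⬝ᵥ v = c := by
    rw [hsw, ← dotProduct_mulVec, hMv, hc]
  have hvw : star v ⬝ᵥ w = c := by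
    rw [hw, dotProduct_mulVec, ← star_mulVec, hMv, hc]
  have hkey : star (w - v) ⬝ᵥ (w - v) = ((μ : ℂ) - 1) * c := by
    rw [star_sub, sub_dotProduct, dotProduct_sub, dotProduct_sub, hww, hwv, hvw, hc]
    ring
  have hS : c = ((∑ j, Complex.normSq (v j) : ℝ) : ℂ) := dot_star_self_eq v
  have hD : star (w - v) ⬝ᵥ (w - v) = ((∑ j, Complex.normSq ((w - v) j) : ℝ) : ℂ) :=
    dot_star_self_eq (w - v)
  set S : ℝ := ∑ j, Complex.normSq (v j) with hSdef
  set D : ℝ := ∑ j, Complex.normSq ((w - v) j) with hDdef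
  have hreal : (μ - 1) * S = D := by
    have : (((μ - 1) * S : ℝ) : ℂ) = ((D : ℝ) : ℂ) := by
      push_cast
      rw [← hS, ← hD, ← hkey]
    exact_mod_cast this
  have hSpos : 0 < S := by
    obtain ⟨j, hj⟩ := Function.ne_iff.mp hvne
    apply Finset.sum_pos' (fun k _ => Complex.normSq_nonneg _)
    exact ⟨j, Finset.mem_univ j, Complex.normSq_pos.mpr hj⟩
  have hDnonneg : 0 ≤ D := Finset.sum_nonneg fun k _ => Complex.normSq_nonneg _
  nlinarith

-- rank lemma
lemma rank_eq_card_ne_zero {n : ℕ} (M : Matrix (Fin n) (Fin n) ℂ) :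
    M.rank = Fintype.card {i // (Matrix.isHermitian_mul_conjTranspose_self M).eigenvalues i ≠ 0} := by
  open scoped ComplexOrder in
  rw [← Matrix.rank_self_mul_conjTranspose M]
  exact (Matrix.isHermitian_mul_conjTranspose_self M).rank_eq_card_non_zero_eigs

-- nullity lemma
lemma nullity_eq_card_eq_one {n : ℕ} (M : Matrix (Fin n) (Fin n) ℂ) :
    nullityOneSubMMH M
      = Fintype.card {i // (Matrix.isHermitian_mul_conjTranspose_self M).eigenvalues i = 1} := by
  classical
  set hA := Matrix.isHermitian_mul_conjTranspose_self M with hAdef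
  set μ : Fin n → ℝ := hA.eigenvalues with hμ
  set U : Matrix (Fin n) (Fin n) ℂ := (hA.eigenvectorUnitary : Matrix (Fin n) (Fin n) ℂ) with hU
  have hUU : U * star U = 1 := (Matrix.mem_unitaryGroup_iff).mp (hA.eigenvectorUnitary).2
  have hUU' : star U * U = 1 := (Matrix.mem_unitaryGroup_iff').mp (hA.eigenvectorUnitary).2
  have hdetU : IsUnit U.det := by
    apply IsUnit.of_mul_eq_one (star U).det
    rw [← Matrix.det_mul, hUU, Matrix.det_one]
  have hdetsU : IsUnit (star U).det := by
    apply IsUnit.of_mul_eq_one U.det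
    rw [← Matrix.det_mul, hUU', Matrix.det_one]
  have hdiag : (1 : Matrix (Fin n) (Fin n) ℂ) - M * Mᴴ
      = U * Matrix.diagonal (fun i => 1 - (μ i : ℂ)) * star U := by
    have hsp := hA.spectral_theorem
    have h1 : (1 : Matrix (Fin n) (Fin n) ℂ) = U * 1 * star U := by
      rw [Matrix.mul_one, hUU]
    have hd : Matrix.diagonal (fun i => 1 - (μ i : ℂ))
        = 1 - Matrix.diagonal (RCLike.ofReal ∘ μ) := by
      rw [← Matrix.diagonal_one, ← Matrix.diagonal_sub]
      rfl
    calc (1 : Matrix (Fin n) (Fin n) ℂ) - M * Mᴴ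
        = U * 1 * star U - U * Matrix.diagonal (RCLike.ofReal ∘ μ) * star U := by
          rw [← h1, hsp, Unitary.conjStarAlgAut_apply]
      _ = U * (1 - Matrix.diagonal (RCLike.ofReal ∘ μ)) * star U := by
          rw [Matrix.mul_sub, Matrix.sub_mul]
      _ = U * Matrix.diagonal (fun i => 1 - (μ i : ℂ)) * star U := by rw [hd]
  have hrank : (1 - M * Mᴴ).rank = Fintype.card {i // (1 : ℂ) - (μ i : ℂ) ≠ 0} := by
    rw [hdiag, Matrix.rank_mul_eq_left_of_isUnit_det _ _ hdetsU,
      Matrix.rank_mul_eq_right_of_isUnit_det _ _ hdetU, Matrix.rank_diagonal]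
  have hcard : Fintype.card {i // (1 : ℂ) - (μ i : ℂ) ≠ 0}
      = Fintype.card {i // μ i ≠ 1} := by
    apply Fintype.card_congr
    apply Equiv.subtypeEquivRight
    intro i
    rw [sub_ne_zero]
    constructor
    · intro h h'; exact h (by exact_mod_cast h'.symm)
    · intro h h'; exact h (by exact_mod_cast h'.symm)
  have hrn : (1 - M * Mᴴ).rank + nullityOneSubMMH M = n := by
    have := LinearMap.finrank_range_add_finrank_ker (Matrix.mulVecLin (1 - M * Mᴴ))
    rw [Matrix.rank, nullityOneSubMMH]
    rw [this]
    simp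
  have hcompl : Fintype.card {i // μ i = 1} = n - Fintype.card {i // μ i ≠ 1} := by
    have := Fintype.card_subtype_compl (fun i : Fin n => μ i ≠ 1)
    simp only [not_not] at this
    rw [this, Fintype.card_fin]
  have hle : Fintype.card {i // μ i ≠ 1} ≤ n := by
    have := Fintype.card_subtype_le (fun i : Fin n => μ i ≠ 1)
    simpa using this
  rw [hcompl, ← hcard, ← hrank]
  omega

end AuxLemmas

/-- An idempotent matrix `M` of rank `r` has, counted with multiplicity,
exactly `t = rank M - dim null(I - M Mᴴ)` singular values strictly greater than `1`,
exactly `r - t` singular values equal to `1`, and exactly `n - r` singular values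
equal to `0`. -/

theorem singularValues_idempotent_count {n : ℕ}
    (M : Matrix (Fin n) (Fin n) ℂ) (hM : M * M = M)
    (r t : ℕ) (hr : r = M.rank) (ht : t = M.rank - nullityOneSubMMH M) :
    Multiset.countP (fun x => 1 < x) (singularValues M) = t ∧
      Multiset.count (1 : ℝ) (singularValues M) = r - t ∧
      Multiset.count (0 : ℝ) (singularValues M) = n - r := by
  classical
  set μ : Fin n → ℝ := (Matrix.isHermitian_mul_conjTranspose_self M).eigenvalues with hμdef
  have hnn : ∀ i, 0 ≤ μ i := fun i => Matrix.eigenvalues_self_mul_conjTranspose_nonneg M i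
  have htri : ∀ i, μ i = 0 ∨ 1 ≤ μ i := fun i => eigs_zero_or_one_le M hM i
  have hsv : singularValues M = Multiset.map (fun i => Real.sqrt (μ i)) Finset.univ.val := rfl
  set a := (Finset.univ.filter (fun i => μ i = 0)).card with ha
  set b := (Finset.univ.filter (fun i => μ i = 1)).card with hb
  set cg := (Finset.univ.filter (fun i => 1 < μ i)).card with hcg
  have hgt : Multiset.countP (fun x => 1 < x) (singularValues M) = cg := by
    rw [hsv, Multiset.countP_map]
    have heq : Multiset.filter (fun i => 1 < Real.sqrt (μ i)) Finset.univ.val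
        = (Finset.univ.filter (fun i => 1 < μ i)).val := by
      rw [Finset.filter_val]
      apply Multiset.filter_congr
      intro i _
      rw [Real.lt_sqrt (by norm_num : (0:ℝ) ≤ 1), one_pow]
    rw [heq, hcg]
    rfl
  have h1c : Multiset.count (1 : ℝ) (singularValues M) = b := by
    rw [hsv, Multiset.count_map]
    have heq : Multiset.filter (fun i => (1:ℝ) = Real.sqrt (μ i)) Finset.univ.val
        = (Finset.univ.filter (fun i => μ i = 1)).val := by
      rw [Finset.filter_val]
      apply Multiset.filter_congr
      intro i _
      rw [eq_comm, Real.sqrt_eq_one]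
    rw [heq, hb]
    rfl
  have h0c : Multiset.count (0 : ℝ) (singularValues M) = a := by
    rw [hsv, Multiset.count_map]
    have heq : Multiset.filter (fun i => (0:ℝ) = Real.sqrt (μ i)) Finset.univ.val
        = (Finset.univ.filter (fun i => μ i = 0)).val := by
      rw [Finset.filter_val]
      apply Multiset.filter_congr
      intro i _
      rw [eq_comm, Real.sqrt_eq_zero']
      constructor
      · intro h; exact le_antisymm h (hnn i)
      · intro h; rw [h]
    rw [heq, ha]
    rfl
  have hne : Finset.univ.filter (fun i => μ i ≠ 0)
      = Finset.univ.filter (fun i => μ i = 1) ∪ Finset.univ.filter (fun i => 1 < μ i) := by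
    ext i
    simp only [Finset.mem_filter, Finset.mem_union, Finset.mem_univ, true_and]
    constructor
    · intro h
      rcases htri i with h0 | h1
      · exact absurd h0 h
      · rcases eq_or_lt_of_le h1 with he | hl
        · exact Or.inl he.symm
        · exact Or.inr hl
    · rintro (h | h)
      · rw [h]; norm_num
      · intro h0; rw [h0] at h; linarith
  have hdisj : Disjoint (Finset.univ.filter (fun i => μ i = 1))
      (Finset.univ.filter (fun i => 1 < μ i)) := by
    rw [Finset.disjoint_left]
    intro i hi1 hi2
    simp only [Finset.mem_filter, Finset.mem_univ, true_and] at hi1 hi2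
    rw [hi1] at hi2
    exact lt_irrefl 1 hi2
  have hbc : (Finset.univ.filter (fun i => μ i ≠ 0)).card = b + cg := by
    rw [hne, Finset.card_union_of_disjoint hdisj]
  have hrk : M.rank = b + cg := by
    rw [rank_eq_card_ne_zero M, Fintype.card_subtype, ← hbc]
  have hnl : nullityOneSubMMH M = b := by
    rw [nullity_eq_card_eq_one M, Fintype.card_subtype, hb]
  have htot : a + ((Finset.univ.filter (fun i => μ i ≠ 0)).card) = n := by
    have h := Finset.card_filter_add_card_filter_not
      (s := (Finset.univ : Finset (Fin n))) (p := fun i => μ i = 0)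
    simp only [Finset.card_univ, Fintype.card_fin] at h
    rw [ha]
    convert h using 2
  rw [hbc] at htot
  refine ⟨?_, ?_, ?_⟩
  · rw [hgt]; omega
  · rw [h1c]; omega
  · rw [h0c]; omega
end

section
/- Let M ∈ ℂ^{n×n} be idempotent of rank r, s = n − r, and let W be unitary with W^H M W = [[I_r, X],[0, 0]], X ∈ ℂ^{r×s}. Then the nonzero singular values of X, counted with multiplicity, are exactly the values √(σ² − 1) where σ ranges (with multiplicity) over the singular values of M that are strictly greater than 1. -/
open Matrix

open Polynomial in
private lemma my_charpoly_unitary_conj {m : Type*} [Fintype m] [DecidableEq m]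
    (U : Matrix m m ℂ) (hU : U ∈ Matrix.unitaryGroup m ℂ) (A : Matrix m m ℂ) :
    (U * A * Uᴴ).charpoly = A.charpoly := by
  have h1 : U * Uᴴ = 1 := by
    have := Matrix.mem_unitaryGroup_iff.mp hU
    rwa [Matrix.star_eq_conjTranspose] at this
  have hdet : ((C : ℂ →+* ℂ[X]).mapMatrix U).det * ((C : ℂ →+* ℂ[X]).mapMatrix Uᴴ).det = 1 := by
    rw [← Matrix.det_mul, ← _root_.map_mul, h1, _root_.map_one, Matrix.det_one]
  have key : charmatrix (U * A * Uᴴ) =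
      (C : ℂ →+* ℂ[X]).mapMatrix U * charmatrix A * (C : ℂ →+* ℂ[X]).mapMatrix Uᴴ := by
    rw [charmatrix, charmatrix, Matrix.mul_sub, Matrix.sub_mul]
    congr 1
    · have hc : (C : ℂ →+* ℂ[X]).mapMatrix U * Matrix.scalar m (X : ℂ[X]) =
          Matrix.scalar m (X : ℂ[X]) * (C : ℂ →+* ℂ[X]).mapMatrix U :=
        (Matrix.scalar_commute (X : ℂ[X]) (fun r' => Commute.all _ _) _).symm
      rw [hc, mul_assoc, ← _root_.map_mul, h1, _root_.map_one, mul_one]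
    · rw [← _root_.map_mul, ← _root_.map_mul]
  rw [Matrix.charpoly, Matrix.charpoly, key, Matrix.det_mul, Matrix.det_mul]
  ring_nf
  rw [mul_comm, ← mul_assoc, mul_comm (((C : ℂ →+* ℂ[X]).mapMatrix Uᴴ).det), hdet, one_mul]

open Polynomial in
private lemma my_charpoly_diagonal {m : Type*} [Fintype m] [DecidableEq m] (d : m → ℂ) :
    (Matrix.diagonal d).charpoly = ∏ i, (X - C (d i)) := by
  have h : charmatrix (Matrix.diagonal d) = Matrix.diagonal (fun i => X - C (d i)) := by
    ext i j
    by_cases hij : i = j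
    · subst hij; simp
    · simp [hij, Matrix.diagonal_apply_ne _ hij]
  rw [Matrix.charpoly, h, Matrix.det_diagonal]

open Polynomial in
private lemma my_charpoly_hermitian {m : Type*} [Fintype m] [DecidableEq m]
    {A : Matrix m m ℂ} (hA : A.IsHermitian) :
    A.charpoly = ∏ i, (X - C ((hA.eigenvalues i : ℝ) : ℂ)) := by
  conv_lhs => rw [hA.spectral_theorem]
  rw [Unitary.conjStarAlgAut_apply]
  rw [show (star ((Matrix.IsHermitian.eigenvectorUnitary hA : Matrix m m ℂ)))
      = (Matrix.IsHermitian.eigenvectorUnitary hA : Matrix m m ℂ)ᴴ from rfl,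
    my_charpoly_unitary_conj _ (Matrix.IsHermitian.eigenvectorUnitary hA).2,
    my_charpoly_diagonal]
  rfl

open Polynomial in
private lemma my_charpoly_one_add_hermitian {m : Type*} [Fintype m] [DecidableEq m]
    {A : Matrix m m ℂ} (hA : A.IsHermitian) :
    (1 + A).charpoly = ∏ i, (X - C ((1 + hA.eigenvalues i : ℝ) : ℂ)) := by
  set U : Matrix m m ℂ := (Matrix.IsHermitian.eigenvectorUnitary hA : Matrix m m ℂ) with hU
  have hUmem : U ∈ Matrix.unitaryGroup m ℂ := (Matrix.IsHermitian.eigenvectorUnitary hA).2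
  have h1 : U * Uᴴ = 1 := by
    have := Matrix.mem_unitaryGroup_iff.mp hUmem
    rwa [Matrix.star_eq_conjTranspose] at this
  have key : 1 + A = U * (1 + Matrix.diagonal (RCLike.ofReal ∘ hA.eigenvalues)) * Uᴴ := by
    rw [Matrix.mul_add, Matrix.add_mul, mul_one, h1]
    congr 1
    conv_lhs => rw [hA.spectral_theorem]
    rfl
  rw [key, my_charpoly_unitary_conj _ hUmem]
  have h2 : (1 : Matrix m m ℂ) + Matrix.diagonal (RCLike.ofReal ∘ hA.eigenvalues)
      = Matrix.diagonal (fun i => ((1 + hA.eigenvalues i : ℝ) : ℂ)) := by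
    rw [← Matrix.diagonal_one, Matrix.diagonal_add]
    congr 1
    funext i
    push_cast
    rfl
  rw [h2, my_charpoly_diagonal]

/-- The singular values of a rectangular complex matrix `X ∈ ℂ^{r×s}`, as a multiset
(of cardinality `r`): the square roots of the eigenvalues of `X Xᴴ`. -/
noncomputable def singularValuesRect {r s : ℕ} (X : Matrix (Fin r) (Fin s) ℂ) : Multiset ℝ :=
  Multiset.map (fun i => Real.sqrt ((Matrix.isHermitian_mul_conjTranspose_self X).eigenvalues i))
    Finset.univ.val

/-- If `M` is idempotent of rank `r`, `s = n - r`, and `W` is unitary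
with `Wᴴ M W = [[I_r, X],[0, 0]]`, then the nonzero singular values of `X`, with
multiplicity, are exactly the values `√(σ² - 1)` where `σ` ranges (with multiplicity)
over the singular values of `M` strictly greater than `1`. -/
theorem singularValues_of_X_block {n r s : ℕ}
    (M : Matrix (Fin n) (Fin n) ℂ) (hM : M * M = M)
    (hr : M.rank = r) (hs : s = n - r) (hrs : r + s = n)
    (W : Matrix (Fin n) (Fin n) ℂ) (hW : W ∈ Matrix.unitaryGroup (Fin n) ℂ)
    (X : Matrix (Fin r) (Fin s) ℂ)
    (hblock : Wᴴ * M * W =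
      (Matrix.fromBlocks (1 : Matrix (Fin r) (Fin r) ℂ) X 0 0).submatrix
        (finSumFinEquiv.symm ∘ Fin.cast hrs.symm) (finSumFinEquiv.symm ∘ Fin.cast hrs.symm)) :
    Multiset.filter (fun x => x ≠ 0) (singularValuesRect X) =
      Multiset.map (fun σ => Real.sqrt (σ ^ 2 - 1))
        (Multiset.filter (fun σ => 1 < σ) (singularValues M)) := by
  classical
  set hMM := Matrix.isHermitian_mul_conjTranspose_self M with hMMdef
  set hXX := Matrix.isHermitian_mul_conjTranspose_self X with hXXdef
  set lam : Fin n → ℝ := hMM.eigenvalues with hlam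
  set mu : Fin r → ℝ := hXX.eigenvalues with hmu
  have hmu_nonneg : ∀ i, 0 ≤ mu i := fun i =>
    Matrix.eigenvalues_self_mul_conjTranspose_nonneg X i
  -- the reindexing equivalence
  set e : Fin n ≃ (Fin r ⊕ Fin s) := (finCongr hrs.symm).trans finSumFinEquiv.symm with he
  have hecoe : (finSumFinEquiv.symm ∘ Fin.cast hrs.symm : Fin n → Fin r ⊕ Fin s) = ⇑e := rfl
  set B : Matrix (Fin r ⊕ Fin s) (Fin r ⊕ Fin s) ℂ :=
    Matrix.fromBlocks (1 : Matrix (Fin r) (Fin r) ℂ) X 0 0 with hB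
  have hWW : W * Wᴴ = 1 := by
    have := Matrix.mem_unitaryGroup_iff.mp hW
    rwa [Matrix.star_eq_conjTranspose] at this
  have hWW' : Wᴴ * W = 1 := by
    have := Matrix.mem_unitaryGroup_iff'.mp hW
    rwa [Matrix.star_eq_conjTranspose] at this
  have hMeq : M = W * (B.submatrix ⇑e ⇑e) * Wᴴ := by
    rw [hecoe] at hblock
    calc M = (W * Wᴴ) * M * (W * Wᴴ) := by rw [hWW]; simp [Matrix.mul_assoc]
    _ = W * (Wᴴ * M * W) * Wᴴ := by simp only [Matrix.mul_assoc]
    _ = W * (B.submatrix ⇑e ⇑e) * Wᴴ := by rw [hblock]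
  -- M Mᴴ
  have hMMH : M * Mᴴ = W * ((B * Bᴴ).submatrix ⇑e ⇑e) * Wᴴ := by
    rw [hMeq]
    simp only [Matrix.conjTranspose_mul, Matrix.conjTranspose_conjTranspose,
      Matrix.conjTranspose_submatrix]
    calc W * B.submatrix ⇑e ⇑e * Wᴴ * (W * (Bᴴ.submatrix ⇑e ⇑e * Wᴴ))
        = W * (B.submatrix ⇑e ⇑e * ((Wᴴ * W) * (Bᴴ.submatrix ⇑e ⇑e * Wᴴ))) := by
          simp only [Matrix.mul_assoc]
      _ = W * ((B.submatrix ⇑e ⇑e * Bᴴ.submatrix ⇑e ⇑e) * Wᴴ) := by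
          rw [hWW', Matrix.one_mul]; simp only [Matrix.mul_assoc]
      _ = W * ((B * Bᴴ).submatrix ⇑e ⇑e * Wᴴ) := by
          rw [Matrix.submatrix_mul_equiv B Bᴴ ⇑e e ⇑e]
      _ = _ := by simp only [Matrix.mul_assoc]
  have hBBH : B * Bᴴ = Matrix.fromBlocks (1 + X * Xᴴ) 0 0 0 := by
    rw [hB]
    simp [Matrix.fromBlocks_conjTranspose, Matrix.fromBlocks_multiply]
  -- charpoly identity
  have hcp : (M * Mᴴ).charpoly = (1 + X * Xᴴ).charpoly * Polynomial.X ^ s := by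
    have h0 : (0 : Matrix (Fin s) (Fin s) ℂ).charpoly = Polynomial.X ^ s := by
      rw [← Matrix.diagonal_zero, my_charpoly_diagonal]
      simp
    rw [hMMH, my_charpoly_unitary_conj _ hW]
    have hre : (B * Bᴴ).submatrix ⇑e ⇑e = Matrix.reindex e.symm e.symm (B * Bᴴ) := by
      rw [Matrix.reindex_apply]; simp
    rw [hre, Matrix.charpoly_reindex, hBBH, Matrix.charpoly_fromBlocks_zero₂₁, h0]
  -- express charpolys via eigenvalues
  have hcpM : (M * Mᴴ).charpoly = ∏ i, (Polynomial.X - Polynomial.C ((lam i : ℝ) : ℂ)) :=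
    my_charpoly_hermitian hMM
  have hcpX : (1 + X * Xᴴ).charpoly
      = ∏ i, (Polynomial.X - Polynomial.C ((1 + mu i : ℝ) : ℂ)) :=
    my_charpoly_one_add_hermitian hXX
  -- take roots
  have hprodroots : ∀ {k : ℕ} (f : Fin k → ℝ),
      (∏ i, (Polynomial.X - Polynomial.C ((f i : ℝ) : ℂ))).roots
        = Multiset.map (fun i => ((f i : ℝ) : ℂ)) Finset.univ.val := by
    intro k f
    rw [Finset.prod_eq_multiset_prod,
      show Multiset.map (fun i => Polynomial.X - Polynomial.C ((f i : ℝ) : ℂ)) Finset.univ.val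
        = Multiset.map (fun a => Polynomial.X - Polynomial.C a)
            (Multiset.map (fun i => ((f i : ℝ) : ℂ)) Finset.univ.val) from
        by rw [Multiset.map_map]; rfl,
      Polynomial.roots_multiset_prod_X_sub_C]
  have hmonic : (∏ i, (Polynomial.X - Polynomial.C ((1 + mu i : ℝ) : ℂ))).Monic :=
    Polynomial.monic_prod_of_monic _ _ (fun i _ => Polynomial.monic_X_sub_C _)
  have hC : Multiset.map (fun i => ((lam i : ℝ) : ℂ)) Finset.univ.val
      = Multiset.map (fun i => ((1 + mu i : ℝ) : ℂ)) Finset.univ.val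
        + Multiset.replicate s (0 : ℂ) := by
    rw [← hprodroots lam, ← hprodroots (fun i => 1 + mu i), ← hcpM, hcp, hcpX]
    rw [Polynomial.roots_mul (mul_ne_zero hmonic.ne_zero
      (pow_ne_zero s Polynomial.X_ne_zero))]
    rw [Polynomial.roots_pow, Polynomial.roots_X, Multiset.nsmul_singleton]
  have hR : Multiset.map lam Finset.univ.val
      = Multiset.map (fun i => 1 + mu i) Finset.univ.val + Multiset.replicate s (0 : ℝ) := by
    apply Multiset.map_injective (Complex.ofReal_injective)
    rw [Multiset.map_add, Multiset.map_map, Multiset.map_map, Multiset.map_replicate]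
    simpa using hC
  -- finish
  show Multiset.filter (fun x => x ≠ 0)
      (Multiset.map (fun i => Real.sqrt (mu i)) Finset.univ.val)
    = Multiset.map (fun σ => Real.sqrt (σ ^ 2 - 1))
        (Multiset.filter (fun σ => 1 < σ)
          (Multiset.map (fun i => Real.sqrt (lam i)) Finset.univ.val))
  rw [show (fun i => Real.sqrt (lam i)) = Real.sqrt ∘ lam from rfl, ← Multiset.map_map, hR,
    Multiset.map_add, Multiset.map_replicate, Real.sqrt_zero, Multiset.filter_add]
  rw [show Multiset.filter (fun σ => 1 < σ) (Multiset.replicate s (0:ℝ)) = 0 from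
    Multiset.filter_eq_nil.mpr (by intro a ha; rw [Multiset.eq_of_mem_replicate ha]; norm_num),
    add_zero, Multiset.map_map, Multiset.filter_map, Multiset.filter_map, Multiset.map_map]
  have hfilt : Multiset.filter ((fun x => x ≠ 0) ∘ (fun i => Real.sqrt (mu i))) Finset.univ.val
      = Multiset.filter ((fun σ => 1 < σ) ∘ (Real.sqrt ∘ fun i => 1 + mu i)) Finset.univ.val := by
    apply Multiset.filter_congr
    intro i _
    simp only [Function.comp]
    rw [ne_eq, Real.sqrt_eq_zero' ]
    rw [show (1:ℝ) < Real.sqrt (1 + mu i) ↔ (1:ℝ)^2 < 1 + mu i from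
      Real.lt_sqrt (by norm_num)]
    constructor
    · intro h; nlinarith [hmu_nonneg i]
    · intro h; nlinarith
  rw [hfilt]
  apply Multiset.map_congr rfl
  intro i hi
  simp only [Function.comp]
  have h1 : (0:ℝ) ≤ 1 + mu i := by nlinarith [hmu_nonneg i]
  rw [Real.sq_sqrt h1]
  congr 1
  ring
end

section
/- Let M ∈ ℂ^{n×n} be idempotent of rank r, let s = n − r, ν = min{r, s}, t = rank(M) − dim(null(I − MM^H)), and let B = 2M − I (which satisfies B² = I). Then the singular values of B, counted with multiplicity, consist of ν pairs of the form (σ, 1/σ) with σ ≥ 1, together with n − 2ν singular values equal to 1; and among the ν pairs exactly t satisfy σ > 1 (the remaining ν − t pairs are (1, 1)). -/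
open Matrix

section Aux

open scoped ComplexOrder
open Matrix Module LinearMap

variable {n : ℕ}

local notation "E" => EuclideanSpace ℂ (Fin n)

lemma ker_eq_orth_range_adjoint (L : E →ₗ[ℂ] E) :
    LinearMap.ker L = (LinearMap.range (LinearMap.adjoint L))ᗮ := by
  ext x
  simp only [LinearMap.mem_ker, Submodule.mem_orthogonal]
  constructor
  · rintro h u ⟨y, rfl⟩
    rw [LinearMap.adjoint_inner_left, h, inner_zero_right]
  · intro h
    have := h (LinearMap.adjoint L (L x)) ⟨L x, rfl⟩
    rwa [LinearMap.adjoint_inner_left, inner_self_eq_zero] at this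

lemma toEuc_mul (A B : Matrix (Fin n) (Fin n) ℂ) :
    toEuclideanLin (A * B) = (toEuclideanLin A).comp (toEuclideanLin B) := by
  ext x; simp [toEuclideanLin_apply, mulVec_mulVec]

lemma toEuc_one : toEuclideanLin (1 : Matrix (Fin n) (Fin n) ℂ) = LinearMap.id := by
  ext x; simp [toEuclideanLin_apply]

lemma toEuc_comp (A : Matrix (Fin n) (Fin n) ℂ) :
    toEuclideanLin A =
      ((WithLp.linearEquiv 2 ℂ (Fin n → ℂ)).symm.toLinearMap.comp
        (A.mulVecLin.comp (WithLp.linearEquiv 2 ℂ (Fin n → ℂ)).toLinearMap)) := rfl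

lemma finrank_range_toEuc (A : Matrix (Fin n) (Fin n) ℂ) :
    Module.finrank ℂ (LinearMap.range (toEuclideanLin A)) = A.rank := by
  rw [toEuc_comp, LinearMap.range_comp, LinearMap.range_comp, LinearEquiv.range,
    Submodule.map_top]
  exact LinearEquiv.finrank_map_eq _ _

lemma finrank_ker_toEuc (A : Matrix (Fin n) (Fin n) ℂ) :
    Module.finrank ℂ (LinearMap.ker (toEuclideanLin A)) =
      Module.finrank ℂ (LinearMap.ker A.mulVecLin) := by
  rw [toEuc_comp, LinearMap.ker_comp_of_ker_eq_bot _ (LinearMap.ker_eq_bot_of_injective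
    (WithLp.linearEquiv 2 ℂ (Fin n → ℂ)).symm.injective), LinearMap.ker_comp,
    Submodule.comap_equiv_eq_map_symm]
  exact LinearEquiv.finrank_map_eq _ _

lemma rank_add_finrank_ker_toEuc (A : Matrix (Fin n) (Fin n) ℂ) :
    A.rank + Module.finrank ℂ (LinearMap.ker (toEuclideanLin A)) = n := by
  rw [← finrank_range_toEuc]
  rw [LinearMap.finrank_range_add_finrank_ker (toEuclideanLin A)]
  simp

lemma main_dims (M : Matrix (Fin n) (Fin n) ℂ) (hM : M * M = M) :
    (M - Mᴴ).rank + 2 * nullityOneSubMMH M = 2 * M.rank ∧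
    nullityOneSubMMH M ≤ M.rank ∧ 2 * M.rank ≤ n + nullityOneSubMMH M := by
  classical
  set L : E →ₗ[ℂ] E := toEuclideanLin M with hL
  set L' : E →ₗ[ℂ] E := toEuclideanLin Mᴴ with hL'
  have hadj : L' = LinearMap.adjoint L := Matrix.toEuclideanLin_conjTranspose_eq_adjoint M
  have hMH : Mᴴ * Mᴴ = Mᴴ := by rw [← conjTranspose_mul, hM]
  have hLL : ∀ x, L (L x) = L x := by
    intro x
    have := congrArg (fun A => toEuclideanLin A x) hM
    simpa [toEuc_mul] using this
  have hL'L' : ∀ x, L' (L' x) = L' x := by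
    intro x
    have := congrArg (fun A => toEuclideanLin A x) hMH
    simpa [toEuc_mul] using this
  -- (A)
  have hA : LinearMap.ker (LinearMap.id - L ∘ₗ L')
      = LinearMap.ker (LinearMap.id - L) ⊓ LinearMap.ker (LinearMap.id - L') := by
    ext x
    simp only [LinearMap.mem_ker, Submodule.mem_inf, LinearMap.sub_apply, LinearMap.id_apply,
      LinearMap.comp_apply, sub_eq_zero]
    constructor
    · intro h
      have hx1 : x = L x := by
        calc x = L (L' x) := h
        _ = L (L (L' x)) := (hLL _).symm
        _ = L x := by rw [← h]
      refine ⟨hx1, ?_⟩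
      have h1 : (inner ℂ (L' x) (L' x) : ℂ) = inner ℂ x x := by
        rw [hadj, LinearMap.adjoint_inner_left, ← hadj, ← h]
      have h2 : (inner ℂ (L' x) x : ℂ) = inner ℂ x x := by
        rw [hadj, LinearMap.adjoint_inner_left, ← hx1]
      have h3 : (inner ℂ x (L' x) : ℂ) = inner ℂ x x := by
        rw [hadj, LinearMap.adjoint_inner_right, ← hx1]
      have hz : (inner ℂ (L' x - x) (L' x - x) : ℂ) = 0 := by
        rw [inner_sub_left, inner_sub_right, inner_sub_right, h1, h2, h3]
        ring
      have := inner_self_eq_zero.mp hz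
      rw [sub_eq_zero] at this
      exact this.symm
    · rintro ⟨hx1, hx2⟩
      calc x = L x := hx1
      _ = L (L' x) := congrArg L hx2
  -- the restricted map
  set K : Submodule ℂ E := LinearMap.ker (L - L') with hK
  set ψ : ↥K →ₗ[ℂ] E := L ∘ₗ K.subtype with hψ
  have memK : ∀ x : E, x ∈ K ↔ L x = L' x := by
    intro x
    simp [hK, sub_eq_zero]
  -- (B)
  have hB : LinearMap.range ψ
      = LinearMap.ker (LinearMap.id - L) ⊓ LinearMap.ker (LinearMap.id - L') := by
    ext y
    simp only [LinearMap.mem_range, Submodule.mem_inf, LinearMap.mem_ker, LinearMap.sub_apply,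
      LinearMap.id_apply, sub_eq_zero]
    constructor
    · rintro ⟨⟨x, hxK⟩, rfl⟩
      rw [memK] at hxK
      have e1 : ψ ⟨x, (memK x).mpr hxK⟩ = L x := rfl
      rw [e1]
      constructor
      · exact (hLL x).symm
      · calc L x = L' x := hxK
        _ = L' (L' x) := (hL'L' x).symm
        _ = L' (L x) := by rw [hxK]
    · rintro ⟨hy1, hy2⟩
      refine ⟨⟨y, (memK y).mpr (by rw [← hy1, ← hy2])⟩, hy1.symm⟩
  -- (C)
  have hle : LinearMap.ker L ⊓ LinearMap.ker L' ≤ K := by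
    intro x hx
    simp only [Submodule.mem_inf, LinearMap.mem_ker] at hx
    rw [memK, hx.1, hx.2]
  have hC : LinearMap.ker ψ = Submodule.comap K.subtype (LinearMap.ker L ⊓ LinearMap.ker L') := by
    ext ⟨x, hxK⟩
    have hxK' := (memK x).mp hxK
    simp only [LinearMap.mem_ker, Submodule.mem_comap, Submodule.mem_inf, hψ,
      LinearMap.comp_apply, Submodule.subtype_apply]
    constructor
    · intro h
      exact ⟨h, by rw [← hxK']; exact h⟩
    · rintro ⟨h, -⟩
      exact h
  -- (D)
  have hD : LinearMap.ker L ⊓ LinearMap.ker L' = (LinearMap.range L' ⊔ LinearMap.range L)ᗮ := by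
    rw [ker_eq_orth_range_adjoint L, ker_eq_orth_range_adjoint L', hadj,
      LinearMap.adjoint_adjoint]
    exact Submodule.inf_orthogonal _ _
  -- (E)
  have hrangeL : LinearMap.range L = LinearMap.ker (LinearMap.id - L) := by
    ext y
    simp only [LinearMap.mem_range, LinearMap.mem_ker, LinearMap.sub_apply, LinearMap.id_apply,
      sub_eq_zero]
    constructor
    · rintro ⟨x, rfl⟩
      exact (hLL x).symm
    · intro h
      exact ⟨y, h.symm⟩
  have hrangeL' : LinearMap.range L' = LinearMap.ker (LinearMap.id - L') := by
    ext y
    simp only [LinearMap.mem_range, LinearMap.mem_ker, LinearMap.sub_apply, LinearMap.id_apply,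
      sub_eq_zero]
    constructor
    · rintro ⟨x, rfl⟩
      exact (hL'L' x).symm
    · intro h
      exact ⟨y, h.symm⟩
  -- numbers
  set r : ℕ := M.rank with hr
  set d : ℕ := nullityOneSubMMH M with hd
  have hdval : d = finrank ℂ
      (LinearMap.ker (LinearMap.id - L) ⊓ LinearMap.ker (LinearMap.id - L') : Submodule ℂ E) := by
    have h5 : toEuclideanLin (1 - M * Mᴴ) = LinearMap.id - L ∘ₗ L' := by
      rw [map_sub, toEuc_one, toEuc_mul]
    rw [hd, nullityOneSubMMH, ← finrank_ker_toEuc, h5, hA]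
  set e : ℕ := finrank ℂ ((LinearMap.range L' ⊔ LinearMap.range L)ᗮ : Submodule ℂ E) with he
  set f : ℕ := finrank ℂ ((LinearMap.range L' ⊔ LinearMap.range L) : Submodule ℂ E) with hf
  set k : ℕ := finrank ℂ (K : Submodule ℂ E) with hk
  have eq1 : d + e = k := by
    have h6 := LinearMap.finrank_range_add_finrank_ker ψ
    rw [hB, hC] at h6
    have h7 : finrank ℂ (Submodule.comap K.subtype
        (LinearMap.ker L ⊓ LinearMap.ker L') : Submodule ℂ ↥K) = e := by
      rw [(Submodule.comapSubtypeEquivOfLe hle).finrank_eq, he, hD]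
    rw [h7, ← hdval, ← hk] at h6
    exact h6
  have eq2 : f + e = n := by
    have := Submodule.finrank_add_finrank_orthogonal
      (K := (LinearMap.range L' ⊔ LinearMap.range L : Submodule ℂ E))
    rw [← he, ← hf] at this
    rw [this]
    simp
  have eq3 : f + d = r + r := by
    have := Submodule.finrank_sup_add_finrank_inf_eq (LinearMap.range L') (LinearMap.range L)
    have hinf : LinearMap.range L' ⊓ LinearMap.range L
        = LinearMap.ker (LinearMap.id - L) ⊓ LinearMap.ker (LinearMap.id - L') := by
      rw [hrangeL, hrangeL', inf_comm]
    rw [hinf, ← hdval] at this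
    rw [this, hL, hL', finrank_range_toEuc, finrank_range_toEuc, rank_conjTranspose, ← hr]

  have eq4 : (M - Mᴴ).rank + k = n := by
    have := rank_add_finrank_ker_toEuc (M - Mᴴ)
    rw [map_sub] at this
    exact this
  have hrf : r ≤ f := by
    rw [hr, ← finrank_range_toEuc M, hf]
    exact Submodule.finrank_mono le_sup_right
  refine ⟨by omega, by omega, by omega⟩

variable {n : ℕ}

lemma count_eig {A : Matrix (Fin n) (Fin n) ℂ} (hA : A.IsHermitian) (μ : ℝ) :
    Multiset.count μ (Multiset.map hA.eigenvalues Finset.univ.val)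
      + (A - (μ : ℂ) • 1).rank = n := by
  classical
  set U : Matrix (Fin n) (Fin n) ℂ := (hA.eigenvectorUnitary : Matrix (Fin n) (Fin n) ℂ) with hU
  have hU1 : U * star U = 1 := by simp [hU]
  have hU2 : star U * U = 1 := by simp [hU]
  have hdetU : IsUnit U.det ∧ IsUnit (star U).det := by
    constructor
    · exact IsUnit.of_mul_eq_one _ (by rw [← det_mul, hU1, det_one])
    · exact IsUnit.of_mul_eq_one _ (by rw [← det_mul, hU2, det_one])
  have hspec : A - (μ : ℂ) • 1
      = U * (diagonal (fun i => (hA.eigenvalues i : ℂ) - μ) * star U) := by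
    have h1 : (diagonal (fun i => (hA.eigenvalues i : ℂ) - μ))
        = diagonal ((RCLike.ofReal ∘ hA.eigenvalues)) - (μ : ℂ) • 1 := by
      ext i j
      by_cases h : i = j <;> simp [diagonal_apply, h, Matrix.one_apply, Matrix.smul_apply]
    rw [h1, sub_mul, mul_sub, smul_mul_assoc, one_mul, mul_smul_comm, hU1, ← mul_assoc]
    conv_lhs => rw [hA.spectral_theorem, Unitary.conjStarAlgAut_apply]
  have hrank : (A - (μ : ℂ) • 1).rank
      = Fintype.card {i // hA.eigenvalues i ≠ μ} := by
    rw [hspec, rank_mul_eq_right_of_isUnit_det U _ hdetU.1,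
      rank_mul_eq_left_of_isUnit_det (star U) _ hdetU.2, Matrix.rank_diagonal]
    apply Fintype.card_congr
    apply Equiv.subtypeEquivRight
    intro i
    constructor
    · intro h h'
      exact h (by rw [h', sub_self])
    · intro h h'
      exact h (by exact_mod_cast sub_eq_zero.mp h')
  have hcount : Multiset.count μ (Multiset.map hA.eigenvalues Finset.univ.val)
      = (Finset.univ.filter (fun i => μ = hA.eigenvalues i)).card := by
    rw [Multiset.count_map]
    rfl
  rw [hcount, hrank, Fintype.card_subtype]
  have := Finset.card_filter_add_card_filter_not
    (s := (Finset.univ : Finset (Fin n))) (p := fun i => μ = hA.eigenvalues i)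
  simp only [Finset.card_univ, Fintype.card_fin] at this
  have h9 : (Finset.filter (fun a => ¬ μ = hA.eigenvalues a) Finset.univ)
      = (Finset.filter (fun x => hA.eigenvalues x ≠ μ) Finset.univ) := by
    ext i
    simp [eq_comm]
  rw [h9] at this
  exact this

lemma comb (S : Multiset ℝ) (n ν t : ℕ) (hpos : ∀ x ∈ S, 0 < x)
    (hcard : Multiset.card S = n)
    (hinv : ∀ μ : ℝ, 0 < μ → S.count μ = S.count μ⁻¹)
    (hone : 2 * t + S.count 1 = n)
    (htν : t ≤ ν) (hνn : 2 * ν ≤ n) :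
    ∃ σ : ℕ → ℝ, (∀ j, j < ν → 1 ≤ σ j) ∧
      S = Multiset.map σ (Finset.range ν).val +
          Multiset.map (fun j => (σ j)⁻¹) (Finset.range ν).val +
          Multiset.replicate (n - 2 * ν) 1 ∧
      ((Finset.range ν).filter (fun j => 1 < σ j)).card = t := by
  classical
  have hinj : Function.Injective (fun x : ℝ => x⁻¹) := fun a b h => by
    simpa using congrArg (fun y : ℝ => y⁻¹) h
  set P := S.filter (fun x => 1 < x) with hP
  set Q := S.filter (fun x => x < 1) with hQ
  have hnm : ∀ μ : ℝ, μ ≤ 0 → S.count μ = 0 := by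
    intro μ hμ
    by_contra h
    have := hpos μ (by
      have := Multiset.count_pos.mp (Nat.pos_of_ne_zero h)
      exact this)
    linarith
  have hPQ : Q = P.map (fun x => x⁻¹) := by
    ext μ
    have hmap : (P.map (fun x => x⁻¹)).count μ = P.count μ⁻¹ := by
      conv_lhs => rw [show μ = (μ⁻¹)⁻¹ by simp]
      exact Multiset.count_map_eq_count' _ _ hinj _
    rw [hmap, hQ, hP, Multiset.count_filter, Multiset.count_filter]
    rcases le_or_gt μ 0 with h0 | h0
    · have h1 : ¬ (1:ℝ) < μ⁻¹ := by
        have : μ⁻¹ ≤ 0 := inv_nonpos.mpr h0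
        linarith
      rw [if_neg h1]
      split
      · exact hnm μ h0
      · rfl
    · rcases lt_trichotomy μ 1 with h1 | h1 | h1
      · rw [if_pos h1, if_pos ((one_lt_inv₀ h0).mpr h1), hinv μ h0]
      · subst h1
        norm_num
      · rw [if_neg (by linarith), if_neg (by
          have : μ⁻¹ < 1 := (inv_lt_one₀ h0).mpr h1
          linarith)]
  have hsplit : S = P + Q + Multiset.replicate (S.count 1) 1 := by
    ext a
    rw [Multiset.count_add, Multiset.count_add, hP, hQ, Multiset.count_filter,
      Multiset.count_filter, Multiset.count_replicate]
    rcases lt_trichotomy a 1 with h1 | h1 | h1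
    · rw [if_neg (by linarith), if_pos h1, if_neg (by linarith)]
      omega
    · subst h1
      norm_num
    · rw [if_pos h1, if_neg (by linarith), if_neg (by linarith)]
      omega
  have hcardP : Multiset.card P = t := by
    have h1 := congrArg Multiset.card hsplit
    rw [Multiset.card_add, Multiset.card_add, Multiset.card_replicate, hPQ,
      Multiset.card_map] at h1
    omega
  set l : List ℝ := P.toList with hl
  have hlen : l.length = t := by rw [hl, Multiset.length_toList, hcardP]
  have hmem : ∀ x ∈ l, 1 < x := by
    intro x hx
    rw [hl, Multiset.mem_toList, hP, Multiset.mem_filter] at hx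
    exact hx.2
  set σ : ℕ → ℝ := fun j => l.getD j 1 with hσ
  have hσ1 : ∀ j, j < t → 1 < σ j := by
    intro j hj
    rw [hσ]
    simp only
    rw [List.getD_eq_getElem l 1 (by omega)]
    exact hmem _ (List.getElem_mem _)
  have hσ2 : ∀ j, t ≤ j → σ j = 1 := by
    intro j hj
    rw [hσ]
    simp only
    exact List.getD_eq_default l 1 (by omega)
  have hmap1 : Multiset.map σ (Finset.range ν).val
      = P + Multiset.replicate (ν - t) 1 := by
    rw [Finset.range_val]
    have hν' : ν = t + (ν - t) := by omega
    rw [hν', Multiset.range_add]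
    rw [Multiset.map_add]
    congr 1
    · -- map σ (range t) = P
      have : Multiset.map σ (Multiset.range t) = (l : Multiset ℝ) := by
        rw [Multiset.range, Multiset.map_coe]
        congr 1
        apply List.ext_getElem
        · simp [hlen]
        · intro i h1 h2
          simp only [List.getElem_map, List.getElem_range]
          rw [hσ]
          simp only
          rw [List.getD_eq_getElem l 1 (by simpa using h2)]
      rw [this, hl, Multiset.coe_toList]
    · -- map σ (map (t+·) range) = replicate
      rw [Multiset.map_map]
      apply Multiset.eq_replicate.mpr
      constructor
      · simp
      · intro b hb
        rw [Multiset.mem_map] at hb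
        obtain ⟨j, -, rfl⟩ := hb
        exact hσ2 _ (by simp)
  have hmap2 : Multiset.map (fun j => (σ j)⁻¹) (Finset.range ν).val
      = Q + Multiset.replicate (ν - t) 1 := by
    have : (fun j => (σ j)⁻¹) = (fun x : ℝ => x⁻¹) ∘ σ := rfl
    rw [this, ← Multiset.map_map, hmap1, Multiset.map_add, ← hPQ, Multiset.map_replicate]
    norm_num
  refine ⟨σ, ?_, ?_, ?_⟩
  · intro j hj
    rcases lt_or_ge j t with h | h
    · exact le_of_lt (hσ1 j h)
    · rw [hσ2 j h]
  · rw [hmap1, hmap2, hsplit]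
    have hc : S.count 1 = (ν - t) + ((ν - t) + (n - 2 * ν)) := by omega
    rw [hc, Multiset.replicate_add, Multiset.replicate_add]
    abel
  · have : (Finset.range ν).filter (fun j => 1 < σ j) = Finset.range t := by
      ext j
      simp only [Finset.mem_filter, Finset.mem_range]
      constructor
      · rintro ⟨h1, h2⟩
        by_contra h
        rw [hσ2 j (by omega)] at h2
        exact lt_irrefl _ h2
      · intro h
        exact ⟨by omega, hσ1 j h⟩
    rw [this, Finset.card_range]

lemma BB_one {M B : Matrix (Fin n) (Fin n) ℂ} (hM : M * M = M) (hB : B = 2 • M - 1) :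
    B * B = 1 := by
  have h2 : B = M + M - 1 := by rw [hB, two_smul]
  rw [h2]
  have : (M + M - 1) * (M + M - 1) = (M * M) + (M * M) + (M * M) + (M * M)
      - (M + M) - (M + M) + 1 := by noncomm_ring
  rw [this, hM]
  abel

lemma rank_pair {B : Matrix (Fin n) (Fin n) ℂ} (hB2 : B * B = 1) (z : ℂ) (hz : z ≠ 0) :
    (B * Bᴴ - z • 1).rank = (B * Bᴴ - z⁻¹ • 1).rank := by
  have hBH2 : Bᴴ * Bᴴ = 1 := by rw [← conjTranspose_mul, hB2, conjTranspose_one]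
  have hdetB : IsUnit B.det := IsUnit.of_mul_eq_one _ (by rw [← det_mul, hB2, det_one])
  set A := B * Bᴴ with hA
  set C := Bᴴ * B with hC
  have hCB : C * B = Bᴴ := by rw [hC, mul_assoc, hB2, mul_one]
  have hCA : C * A = 1 := by
    rw [hC, hA, mul_assoc, ← mul_assoc B B Bᴴ, hB2, one_mul, hBH2]
  have key1 : B * ((C - z • 1) * B) = A - z • 1 := by
    rw [sub_mul, smul_mul_assoc, one_mul, mul_sub, mul_smul_comm, hB2, hCB, ← hA]
  have key2 : ((-z) • C) * (A - z⁻¹ • 1) = C - z • 1 := by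
    rw [smul_mul_assoc, mul_sub, hCA, mul_smul_comm, mul_one, smul_sub, smul_smul,
      neg_mul, mul_inv_cancel₀ hz, neg_smul, neg_smul, one_smul, sub_neg_eq_add]
    abel
  have hdetC : IsUnit C.det := IsUnit.of_mul_eq_one _ (by rw [← det_mul, hCA, det_one])
  have hdetzC : IsUnit ((-z) • C).det := by
    rw [Matrix.det_smul]
    exact ((IsUnit.pow _ (by simpa using hz)).mul hdetC)
  rw [← key1, rank_mul_eq_right_of_isUnit_det B _ hdetB,
    rank_mul_eq_left_of_isUnit_det B _ hdetB, ← key2,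
    rank_mul_eq_right_of_isUnit_det _ _ hdetzC]

lemma rank_sub_one {M B : Matrix (Fin n) (Fin n) ℂ} (hB : B = 2 • M - 1) (hB2 : B * B = 1) :
    (B * Bᴴ - (1 : ℂ) • 1).rank = (M - Mᴴ).rank := by
  have hB' : B = (2 : ℂ) • M - 1 := by
    rw [hB, ← Nat.cast_smul_eq_nsmul ℂ 2 M]
    norm_num
  have hBH : Bᴴ = (2 : ℂ) • Mᴴ - 1 := by
    rw [hB', conjTranspose_sub, conjTranspose_smul, conjTranspose_one]
    norm_num
  have hker : LinearMap.ker (B * Bᴴ - (1 : ℂ) • 1).mulVecLin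
      = LinearMap.ker (M - Mᴴ).mulVecLin := by
    ext x
    simp only [LinearMap.mem_ker, mulVecLin_apply, sub_mulVec, smul_mulVec, one_mulVec,
      one_smul, sub_eq_zero]
    have hBv : ∀ y, B *ᵥ (B *ᵥ y) = y := by
      intro y
      rw [mulVec_mulVec, hB2, one_mulVec]
    have hbridge : ∀ y : Fin n → ℂ, B *ᵥ y - Bᴴ *ᵥ y = (2 : ℂ) • (M *ᵥ y - Mᴴ *ᵥ y) := by
      intro y
      rw [hBH, hB']
      simp only [sub_mulVec, smul_mulVec, one_mulVec, smul_sub]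
      abel
    constructor
    · intro h
      have h1 : B *ᵥ x = Bᴴ *ᵥ x := by
        have := congrArg (fun y => B *ᵥ y) h
        rw [← mulVec_mulVec, hBv] at this
        exact this.symm
      have h2 : (2 : ℂ) • (M *ᵥ x - Mᴴ *ᵥ x) = 0 := by
        rw [← hbridge, h1, sub_self]
      have h3 := smul_eq_zero.mp h2
      rcases h3 with h3 | h3
      · norm_num at h3
      · rw [sub_eq_zero] at h3
        exact h3
    · intro h
      have h1 : B *ᵥ x = Bᴴ *ᵥ x := by
        have : B *ᵥ x - Bᴴ *ᵥ x = 0 := by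
          rw [hbridge, h, sub_self, smul_zero]
        rw [sub_eq_zero] at this
        exact this
      rw [← mulVec_mulVec, ← h1, hBv]
  have ha := LinearMap.finrank_range_add_finrank_ker (B * Bᴴ - (1 : ℂ) • 1).mulVecLin
  have hb := LinearMap.finrank_range_add_finrank_ker (M - Mᴴ).mulVecLin
  rw [hker] at ha
  rw [Matrix.rank, Matrix.rank]
  simp only [Module.finrank_pi, Fintype.card_fin] at ha hb
  omega

end Aux

/-- Let `M` be idempotent of rank `r`, `s = n - r`, `ν = min r s`,
`t = rank M - dim null(I - M Mᴴ)` and `B = 2M - I` (so `B² = I`). Then the singular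
values of `B`, with multiplicity, consist of `ν` pairs `(σ, 1/σ)` with `σ ≥ 1`
together with `n - 2ν` singular values equal to `1`, and exactly `t` of the pairs
satisfy `σ > 1` (the remaining `ν - t` pairs are `(1,1)`). -/
theorem singularValues_involutory_pairs {n : ℕ}
    (M : Matrix (Fin n) (Fin n) ℂ) (hM : M * M = M)
    (r s ν t : ℕ) (hr : r = M.rank) (hs : s = n - r) (hν : ν = min r s)
    (ht : t = M.rank - nullityOneSubMMH M)
    (B : Matrix (Fin n) (Fin n) ℂ) (hB : B = 2 • M - 1) :
    B * B = 1 ∧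
      ∃ σ : ℕ → ℝ,
        (∀ j, j < ν → 1 ≤ σ j) ∧
        singularValues B =
          Multiset.map σ (Finset.range ν).val +
            Multiset.map (fun j => (σ j)⁻¹) (Finset.range ν).val +
            Multiset.replicate (n - 2 * ν) (1 : ℝ) ∧
        ((Finset.range ν).filter (fun j => 1 < σ j)).card = t := by
  have hB2 : B * B = 1 := BB_one hM hB
  refine ⟨hB2, ?_⟩
  classical
  have hAH : (B * Bᴴ).IsHermitian := Matrix.isHermitian_mul_conjTranspose_self B
  set lam := hAH.eigenvalues with hlam
  -- positivity of the eigenvalues of B Bᴴ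
  have hdetB : IsUnit B.det := IsUnit.of_mul_eq_one _ (by rw [← det_mul, hB2, det_one])
  have hdetA : (B * Bᴴ).det ≠ 0 := by
    rw [det_mul, det_conjTranspose]
    simp only [ne_eq, mul_eq_zero, not_or]
    constructor
    · exact hdetB.ne_zero
    · simpa using hdetB.ne_zero
  have hpos_eig : ∀ i, 0 < lam i := by
    intro i
    rcases lt_or_eq_of_le (Matrix.eigenvalues_self_mul_conjTranspose_nonneg B i) with h | h
    · exact h
    · exfalso
      apply hdetA
      rw [hAH.det_eq_prod_eigenvalues]
      apply Finset.prod_eq_zero (Finset.mem_univ i)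
      have h2 : ((hAH.eigenvalues i : ℝ) : ℂ) = ((0 : ℝ) : ℂ) :=
        congrArg (fun x : ℝ => (x : ℂ)) h.symm
      simpa using h2
  set S := singularValues B with hS
  have hS' : S = Multiset.map (fun i => Real.sqrt (lam i)) Finset.univ.val := rfl
  have hcard : Multiset.card S = n := by simp [hS']
  have hpos : ∀ x ∈ S, 0 < x := by
    intro x hx
    rw [hS', Multiset.mem_map] at hx
    obtain ⟨i, -, rfl⟩ := hx
    exact Real.sqrt_pos.mpr (hpos_eig i)
  have hcount : ∀ μ : ℝ, 0 < μ →
      S.count μ + (B * Bᴴ - ((μ ^ 2 : ℝ) : ℂ) • 1).rank = n := by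
    intro μ hμ
    have h1 : S.count μ = Multiset.count (μ ^ 2) (Multiset.map lam Finset.univ.val) := by
      rw [hS', Multiset.count_map, Multiset.count_map]
      congr 1
      apply Multiset.filter_congr
      intro i _
      constructor
      · intro h
        rw [h, Real.sq_sqrt (hpos_eig i).le]
      · intro h
        rw [← h, Real.sqrt_sq hμ.le]
    rw [h1]
    exact count_eig hAH (μ ^ 2)
  have hinv : ∀ μ : ℝ, 0 < μ → S.count μ = S.count μ⁻¹ := by
    intro μ hμ
    have e1 := hcount μ hμ
    have e2 := hcount μ⁻¹ (inv_pos.mpr hμ)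
    have e3 := rank_pair hB2 ((μ ^ 2 : ℝ) : ℂ) (by
      simp only [ne_eq, Complex.ofReal_eq_zero]
      positivity)
    have e4 : (((μ ^ 2 : ℝ) : ℂ))⁻¹ = (((μ⁻¹ ^ 2 : ℝ)) : ℂ) := by
      push_cast
      rw [inv_pow]
    rw [e4] at e3
    omega
  have hranks := main_dims M hM
  set r' : ℕ := M.rank with hr'
  set d : ℕ := nullityOneSubMMH M with hd
  have hrn : r' ≤ n := by
    have := Matrix.rank_le_card_width M
    simpa using this
  have hone : 2 * (r' - d) + S.count 1 = n := by
    have e1 := hcount 1 one_pos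
    have e2 : (((1 : ℝ) ^ 2 : ℝ) : ℂ) = (1 : ℂ) := by norm_num
    rw [e2, rank_sub_one hB hB2] at e1
    omega
  have hcomb := comb S n (min r' (n - r')) (r' - d) hpos hcard hinv hone (by omega) (by omega)
  subst hr hs hν ht
  exact hcomb
end

section
/- Let M ∈ ℂ^{n×n} be idempotent and B = 2M − I. Then the singular values of B that are strictly greater than 1, counted with multiplicity, are exactly the values σ + √(σ² − 1) where σ ranges (with multiplicity) over the singular values of M that are strictly greater than 1; equivalently, writing σ = 1/cos ψ with 0 < ψ < π/2, the corresponding singular value of B is tan(½(π/2 + ψ)), and its reciprocal 1/(σ + √(σ² − 1)) is also a singular value of B with the same multiplicity. -/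
open Matrix

namespace SVAux

open Module

variable {n : ℕ}

noncomputable def nullity (X : Matrix (Fin n) (Fin n) ℂ) : ℕ :=
  finrank ℂ (LinearMap.ker X.mulVecLin)

lemma nullity_add_rank (X : Matrix (Fin n) (Fin n) ℂ) : X.rank + nullity X = n := by
  have := LinearMap.finrank_range_add_finrank_ker X.mulVecLin
  simpa [Matrix.rank, nullity] using this

lemma card_eig_eq_nullity (A : Matrix (Fin n) (Fin n) ℂ) (hA : A.IsHermitian) (t : ℝ) :
    Fintype.card {i // hA.eigenvalues i = t} = nullity (A - (t : ℂ) • 1) := by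
  have hU : (hA.eigenvectorUnitary : Matrix (Fin n) (Fin n) ℂ) *
      (star (hA.eigenvectorUnitary : Matrix (Fin n) (Fin n) ℂ)) = 1 :=
    (Matrix.mem_unitaryGroup_iff).mp hA.eigenvectorUnitary.2
  have hdet : IsUnit (hA.eigenvectorUnitary : Matrix (Fin n) (Fin n) ℂ).det :=
    Matrix.isUnit_det_of_right_inverse hU
  have hdets : IsUnit (star (hA.eigenvectorUnitary : Matrix (Fin n) (Fin n) ℂ)).det := by
    have : IsUnit ((star (hA.eigenvectorUnitary : Matrix (Fin n) (Fin n) ℂ)) *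
        (hA.eigenvectorUnitary : Matrix (Fin n) (Fin n) ℂ)).det := by
      rw [(Matrix.mem_unitaryGroup_iff').mp hA.eigenvectorUnitary.2]; simp
    rw [Matrix.det_mul] at this
    exact isUnit_of_mul_isUnit_left this
  have hdecomp : A - (t : ℂ) • 1 =
      (hA.eigenvectorUnitary : Matrix (Fin n) (Fin n) ℂ) *
        diagonal (fun i => ((hA.eigenvalues i - t : ℝ) : ℂ)) *
        (star (hA.eigenvectorUnitary : Matrix (Fin n) (Fin n) ℂ)) := by
    have hdiag : diagonal (fun i => ((hA.eigenvalues i - t : ℝ) : ℂ)) =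
        diagonal (RCLike.ofReal ∘ hA.eigenvalues) - (t : ℂ) • 1 := by
      ext i j
      by_cases h : i = j <;> simp [h, Matrix.one_apply, diagonal]
    rw [hdiag, mul_sub, sub_mul, Matrix.mul_smul, Matrix.smul_mul, mul_one, hU]
    conv_lhs => rw [hA.spectral_theorem, Unitary.conjStarAlgAut_apply]
  have hrank : (A - (t : ℂ) • 1).rank =
      (diagonal (fun i => ((hA.eigenvalues i - t : ℝ) : ℂ))).rank := by
    rw [hdecomp, rank_mul_eq_left_of_isUnit_det _ _ hdets,
      rank_mul_eq_right_of_isUnit_det _ _ hdet]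
  have hrd : (diagonal (fun i => ((hA.eigenvalues i - t : ℝ) : ℂ))).rank =
      Fintype.card {i // hA.eigenvalues i ≠ t} := by
    rw [Matrix.rank_diagonal]
    apply Fintype.card_congr
    apply Equiv.subtypeEquivRight
    intro i
    simp [sub_eq_zero]
  have hsplit : Fintype.card {i // hA.eigenvalues i = t} +
      Fintype.card {i // hA.eigenvalues i ≠ t} = n := by
    classical
    rw [Fintype.card_subtype, Fintype.card_subtype,
      Finset.card_filter_add_card_filter_not, Finset.card_univ, Fintype.card_fin]
  have := nullity_add_rank (A - (t : ℂ) • 1)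
  omega

lemma nullity_le_of (X Y F : Matrix (Fin n) (Fin n) ℂ)
    (h1 : ∀ v, X *ᵥ v = 0 → Y *ᵥ (F *ᵥ v) = 0)
    (h2 : ∀ v, X *ᵥ v = 0 → F *ᵥ v = 0 → v = 0) :
    nullity X ≤ nullity Y := by
  let φ : LinearMap.ker X.mulVecLin →ₗ[ℂ] LinearMap.ker Y.mulVecLin :=
    (F.mulVecLin.domRestrict (LinearMap.ker X.mulVecLin)).codRestrict
      (LinearMap.ker Y.mulVecLin) (fun v => by
        have hm : X *ᵥ (v : Fin n → ℂ) = 0 := v.2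
        exact h1 v.1 hm)
  have hinj : Function.Injective φ := by
    rw [← LinearMap.ker_eq_bot, LinearMap.ker_eq_bot']
    intro v hv
    have hv' : F *ᵥ (v : Fin n → ℂ) = 0 := congrArg Subtype.val hv
    have hx : X *ᵥ (v : Fin n → ℂ) = 0 := v.2
    exact Subtype.ext (h2 v.1 hx hv')
  exact LinearMap.finrank_le_finrank_of_injective hinj

lemma nullity_smul (c : ℂ) (hc : c ≠ 0) (X : Matrix (Fin n) (Fin n) ℂ) :
    nullity (c • X) = nullity X := by
  unfold nullity
  have : LinearMap.ker (c • X).mulVecLin = LinearMap.ker X.mulVecLin := by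
    ext v
    constructor
    · intro hv
      have : (c • X) *ᵥ v = 0 := hv
      rw [smul_mulVec, smul_eq_zero] at this
      exact this.resolve_left hc
    · intro hv
      have hv' : X *ᵥ v = 0 := hv
      show (c • X) *ᵥ v = 0
      rw [smul_mulVec, hv', smul_zero]
  rw [this]

section Pairing

variable {B : Matrix (Fin n) (Fin n) ℂ}

lemma nullity_pair_le (hB2 : B * B = 1) (c : ℂ) (hc : c ≠ 0) :
    nullity (B * Bᴴ - c • 1) ≤ nullity (B * Bᴴ - c⁻¹ • 1) := by
  have hBH2 : Bᴴ * Bᴴ = 1 := by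
    rw [← conjTranspose_mul, hB2, conjTranspose_one]
  apply nullity_le_of _ _ Bᴴ
  · intro v hv
    have hKv : (B * Bᴴ) *ᵥ v = c • v := by
      have := sub_eq_zero.mpr (rfl : (B * Bᴴ) *ᵥ v - (B * Bᴴ) *ᵥ v = _)
      rw [sub_mulVec, sub_eq_zero] at hv
      simpa [smul_mulVec, one_mulVec] using hv
    have h1 : B *ᵥ ((B * Bᴴ) *ᵥ v) = Bᴴ *ᵥ v := by
      rw [mulVec_mulVec, ← mul_assoc, hB2, one_mul]
    rw [hKv, mulVec_smul] at h1
    have h2 : (B * Bᴴ) *ᵥ (Bᴴ *ᵥ v) = B *ᵥ v := by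
      rw [mulVec_mulVec, mul_assoc, hBH2, mul_one]
    rw [sub_mulVec, h2, smul_mulVec, one_mulVec, ← h1, smul_smul,
      inv_mul_cancel₀ hc, one_smul, sub_self]
  · intro v _ hFv
    have : (Bᴴ * Bᴴ) *ᵥ v = 0 := by rw [← mulVec_mulVec, hFv, mulVec_zero]
    rwa [hBH2, one_mulVec] at this

lemma nullity_pair (hB2 : B * B = 1) (c : ℂ) (hc : c ≠ 0) :
    nullity (B * Bᴴ - c • 1) = nullity (B * Bᴴ - c⁻¹ • 1) := by
  refine le_antisymm (nullity_pair_le hB2 c hc) ?_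
  have := nullity_pair_le hB2 c⁻¹ (inv_ne_zero hc)
  rwa [inv_inv] at this

end Pairing

lemma eigen_of_mem (X : Matrix (Fin n) (Fin n) ℂ) (c : ℂ) (v : Fin n → ℂ)
    (hv : (X - c • 1) *ᵥ v = 0) : X *ᵥ v = c • v := by
  rw [sub_mulVec, smul_mulVec, one_mulVec, sub_eq_zero] at hv
  exact hv

lemma forward_le {B : Matrix (Fin n) (Fin n) ℂ} (hB2 : B * B = 1) (l : ℝ) (hl : 1 < l) :
    nullity (B * Bᴴ - (l : ℂ) • 1) ≤
      nullity ((B * Bᴴ + B + Bᴴ + 1) - ((l + 2 + l⁻¹ : ℝ) : ℂ) • 1) := by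
  have hBH2 : Bᴴ * Bᴴ = 1 := by rw [← conjTranspose_mul, hB2, conjTranspose_one]
  set lc : ℂ := (l : ℂ) with hlc
  have hlc0 : lc ≠ 0 := by
    simp only [hlc, Complex.ofReal_ne_zero]; linarith
  have hac : ((l + 2 + l⁻¹ : ℝ) : ℂ) = lc + 2 + lc⁻¹ := by push_cast; ring
  apply nullity_le_of _ _ (1 + lc⁻¹ • Bᴴ)
  · intro v hv
    have hKv : (B * Bᴴ) *ᵥ v = lc • v := eigen_of_mem _ _ _ hv
    set w : Fin n → ℂ := Bᴴ *ᵥ v with hw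
    have fact1 : Bᴴ *ᵥ w = v := by rw [hw, mulVec_mulVec, hBH2, one_mulVec]
    have fact2 : B *ᵥ w = lc • v := by rw [hw, mulVec_mulVec]; exact hKv
    have fact3 : B *ᵥ v = lc⁻¹ • w := by
      have h : B *ᵥ ((B * Bᴴ) *ᵥ v) = w := by
        rw [mulVec_mulVec, ← mul_assoc, hB2, one_mul, hw]
      rw [hKv, mulVec_smul] at h
      rw [← h, smul_smul, inv_mul_cancel₀ hlc0, one_smul]
    have fact4 : (B * Bᴴ) *ᵥ w = lc⁻¹ • w := by
      rw [hw, mulVec_mulVec, mul_assoc, hBH2, mul_one]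
      exact fact3
    have hFv : (1 + lc⁻¹ • Bᴴ) *ᵥ v = v + lc⁻¹ • w := by
      rw [add_mulVec, one_mulVec, smul_mulVec, hw]
    rw [hFv, sub_mulVec, smul_mulVec, one_mulVec, hac]
    rw [add_mulVec, add_mulVec, add_mulVec, one_mulVec]
    rw [mulVec_add, mulVec_smul, hKv, fact4]
    rw [mulVec_add, mulVec_smul, fact3, fact2]
    rw [mulVec_add, mulVec_smul, ← hw, fact1]
    match_scalars <;> field_simp <;> ring
  · intro v hv hFv
    have hKv : (B * Bᴴ) *ᵥ v = lc • v := eigen_of_mem _ _ _ hv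
    have hw : Bᴴ *ᵥ v = -(lc • v) := by
      rw [add_mulVec, one_mulVec, smul_mulVec] at hFv
      have h2 := congrArg (fun x => lc • x) hFv
      simp only [smul_add, smul_zero, smul_smul, mul_inv_cancel₀ hlc0, one_smul] at h2
      rw [add_comm] at h2
      rwa [add_eq_zero_iff_eq_neg] at h2
    have hv2 : Bᴴ *ᵥ (Bᴴ *ᵥ v) = v := by rw [mulVec_mulVec, hBH2, one_mulVec]
    rw [hw, mulVec_neg, mulVec_smul, hw] at hv2
    have : (lc * lc - 1) • v = 0 := by
      have h3 : lc • lc • v = v := by simpa using hv2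
      rw [sub_smul, one_smul, mul_smul, h3, sub_self]
    have hne : lc * lc - 1 ≠ 0 := by
      rw [hlc]
      intro h
      have : ((l * l - 1 : ℝ) : ℂ) = 0 := by push_cast; linear_combination h
      rw [Complex.ofReal_eq_zero] at this
      nlinarith
    have := smul_eq_zero.mp this
    exact this.resolve_left hne

lemma backward_le {B : Matrix (Fin n) (Fin n) ℂ} (hB2 : B * B = 1) (l : ℝ) (hl : 1 < l) :
    nullity ((B * Bᴴ + B + Bᴴ + 1) - ((l + 2 + l⁻¹ : ℝ) : ℂ) • 1) ≤
      nullity (B * Bᴴ - (l : ℂ) • 1) := by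
  have hBH2 : Bᴴ * Bᴴ = 1 := by rw [← conjTranspose_mul, hB2, conjTranspose_one]
  set lc : ℂ := (l : ℂ) with hlc
  have hl0 : (0:ℝ) < l := by linarith
  have hlc0 : lc ≠ 0 := by simp only [hlc, Complex.ofReal_ne_zero]; linarith
  set ac : ℂ := lc + 2 + lc⁻¹ with hac_def
  have hac : ((l + 2 + l⁻¹ : ℝ) : ℂ) = ac := by rw [hac_def, hlc]; push_cast; ring
  have hac0 : ac ≠ 0 := by
    rw [← hac, Complex.ofReal_ne_zero]
    have : 0 < l⁻¹ := by positivity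
    linarith
  set K : Matrix (Fin n) (Fin n) ℂ := B * Bᴴ with hK
  set G : Matrix (Fin n) (Fin n) ℂ := Bᴴ * B with hG
  set D : Matrix (Fin n) (Fin n) ℂ := B + Bᴴ with hD
  have idGK : G * K = 1 := by
    rw [hG, hK, mul_assoc, ← mul_assoc B B Bᴴ, hB2, one_mul, hBH2]
  have idKG : K * G = 1 := by
    rw [hG, hK, mul_assoc, ← mul_assoc Bᴴ Bᴴ B, hBH2, one_mul, hB2]
  have idDK : D * K = G * D := by
    rw [hD, hK, hG, add_mul, mul_add, ← mul_assoc B B Bᴴ, hB2, one_mul,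
      mul_assoc Bᴴ B B, hB2, mul_one, mul_assoc Bᴴ B Bᴴ]
  have idDD : D * D = K + G + (1 + 1) := by
    rw [hD, hK, hG, add_mul, mul_add, mul_add, hB2, hBH2]
    abel
  -- shared derivation
  have key : ∀ u : Fin n → ℂ, ((K + B + Bᴴ + 1) - ((l + 2 + l⁻¹ : ℝ) : ℂ) • 1) *ᵥ u = 0 →
      (D *ᵥ u = ac • u - (K *ᵥ u + u)) ∧
      (K *ᵥ u + G *ᵥ u = (ac - 2) • u) := by
    intro u hu
    have hPu : (K + B + Bᴴ + 1) *ᵥ u = ac • u := by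
      rw [← hac]; exact eigen_of_mem _ _ _ hu
    rw [add_mulVec, add_mulVec, add_mulVec, one_mulVec] at hPu
    have hDu : D *ᵥ u = B *ᵥ u + Bᴴ *ᵥ u := by rw [hD, add_mulVec]
    have hdu : D *ᵥ u = ac • u - (K *ᵥ u + u) := by
      rw [hDu, eq_sub_iff_add_eq]
      rw [show B *ᵥ u + Bᴴ *ᵥ u + (K *ᵥ u + u) = K *ᵥ u + B *ᵥ u + Bᴴ *ᵥ u + u from by abel]
      exact hPu
    refine ⟨hdu, ?_⟩
    have f1 : D *ᵥ (K *ᵥ u) = G *ᵥ (D *ᵥ u) := by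
      rw [mulVec_mulVec, mulVec_mulVec, idDK]
    have f2 : D *ᵥ (D *ᵥ u) = K *ᵥ u + G *ᵥ u + (u + u) := by
      rw [mulVec_mulVec, idDD, add_mulVec, add_mulVec, add_mulVec, one_mulVec]
    have f3 : G *ᵥ (K *ᵥ u) = u := by rw [mulVec_mulVec, idGK, one_mulVec]
    have hGdu : G *ᵥ (D *ᵥ u) = ac • (G *ᵥ u) - (u + G *ᵥ u) := by
      rw [hdu, mulVec_sub, mulVec_smul, mulVec_add, f3]
    have E0 : D *ᵥ (D *ᵥ u) = D *ᵥ (ac • u - (K *ᵥ u + u)) := by rw [← hdu]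
    rw [f2, mulVec_sub, mulVec_smul, mulVec_add, f1, hGdu, hdu] at E0
    -- E0 : K*ᵥu + G*ᵥu + (u+u) = ac•(ac•u - (K*ᵥu+u)) - ((ac•(G*ᵥu) - (u + G*ᵥu)) + (ac•u - (K*ᵥu+u)))
    have h6 : ac • (K *ᵥ u + G *ᵥ u) - (ac * (ac - 2)) • u =
        (K *ᵥ u + G *ᵥ u + (u + u)) -
          (ac • (ac • u - (K *ᵥ u + u)) -
            ((ac • (G *ᵥ u) - (u + G *ᵥ u)) + (ac • u - (K *ᵥ u + u)))) := by
      module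
    rw [E0, sub_self] at h6
    have h5 : ac • (K *ᵥ u + G *ᵥ u) = ac • ((ac - 2) • u) := by
      rw [sub_eq_zero] at h6
      rw [h6, smul_smul]
    exact smul_right_injective (Fin n → ℂ) hac0 h5
  apply nullity_le_of _ _ (lc • K - 1)
  · intro u hu
    obtain ⟨hdu, hkg⟩ := key u hu
    have hkku : K *ᵥ (K *ᵥ u) = (ac - 2) • (K *ᵥ u) - u := by
      have h := congrArg (fun x => K *ᵥ x) hkg
      simp only [mulVec_add, mulVec_smul] at h
      have f4 : K *ᵥ (G *ᵥ u) = u := by rw [mulVec_mulVec, idKG, one_mulVec]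
      rw [f4] at h
      rw [eq_sub_iff_add_eq]
      exact h
    have hFu : (lc • K - 1) *ᵥ u = lc • (K *ᵥ u) - u := by
      rw [sub_mulVec, smul_mulVec, one_mulVec]
    rw [hFu, sub_mulVec, smul_mulVec, one_mulVec, mulVec_sub, mulVec_smul, hkku,
      hac_def]
    match_scalars <;> field_simp <;> ring
  · intro u hu hFu
    obtain ⟨hdu, hkg⟩ := key u hu
    have hku : K *ᵥ u = lc⁻¹ • u := by
      rw [sub_mulVec, smul_mulVec, one_mulVec, sub_eq_zero] at hFu
      have := congrArg (fun x => lc⁻¹ • x) hFu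
      simpa [smul_smul, inv_mul_cancel₀ hlc0] using this
    have hgu : G *ᵥ u = (ac - 2) • u - lc⁻¹ • u := by
      rw [eq_sub_iff_add_eq, ← hku, add_comm]
      exact hkg
    have f1 : D *ᵥ (K *ᵥ u) = G *ᵥ (D *ᵥ u) := by
      rw [mulVec_mulVec, mulVec_mulVec, idDK]
    have lhsEq : D *ᵥ (K *ᵥ u) = lc⁻¹ • (ac • u - (lc⁻¹ • u + u)) := by
      rw [hku, mulVec_smul, hdu, hku]
    have rhsEq : G *ᵥ (D *ᵥ u) =
        ac • ((ac - 2) • u - lc⁻¹ • u) -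
          (lc⁻¹ • ((ac - 2) • u - lc⁻¹ • u) + ((ac - 2) • u - lc⁻¹ • u)) := by
      rw [hdu, hku, mulVec_sub, mulVec_smul, mulVec_add, mulVec_smul, hgu]
    have heq : lc⁻¹ • (ac • u - (lc⁻¹ • u + u)) =
        ac • ((ac - 2) • u - lc⁻¹ • u) -
          (lc⁻¹ • ((ac - 2) • u - lc⁻¹ • u) + ((ac - 2) • u - lc⁻¹ • u)) := by
      rw [← lhsEq, ← rhsEq, f1]
    have hzero : ((lc + 1) * (lc - lc⁻¹)) • u = 0 := by
      have h7 : ((lc + 1) * (lc - lc⁻¹)) • u =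
          (ac • ((ac - 2) • u - lc⁻¹ • u) -
            (lc⁻¹ • ((ac - 2) • u - lc⁻¹ • u) + ((ac - 2) • u - lc⁻¹ • u))) -
          lc⁻¹ • (ac • u - (lc⁻¹ • u + u)) := by
        rw [hac_def]
        match_scalars <;> (field_simp; try ring; try (field_simp; ring))
      rw [h7, ← heq, sub_self]
    have hco : (lc + 1) * (lc - lc⁻¹) ≠ 0 := by
      apply mul_ne_zero
      · rw [hlc]
        intro h
        have h8 : ((l + 1 : ℝ) : ℂ) = 0 := by push_cast; linear_combination h
        rw [Complex.ofReal_eq_zero] at h8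
        linarith
      · rw [sub_ne_zero]
        intro h
        have h2 : lc * lc = 1 := by
          nth_rewrite 2 [h]
          exact mul_inv_cancel₀ hlc0
        have h9 : ((l * l - 1 : ℝ) : ℂ) = 0 := by
          rw [hlc] at h2; push_cast; linear_combination h2
        rw [Complex.ofReal_eq_zero] at h9
        nlinarith
    exact (smul_eq_zero.mp hzero).resolve_left hco

lemma gequiv {x σ : ℝ} (hx : 1 < x) :
    (x = σ + Real.sqrt (σ ^ 2 - 1) ∧ 1 < σ) ↔ (x + x⁻¹) / 2 = σ := by
  have hx0 : x ≠ 0 := by linarith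
  have hinv : x * x⁻¹ = 1 := mul_inv_cancel₀ hx0
  constructor
  · rintro ⟨hxe, hσ⟩
    have hs2 : Real.sqrt (σ ^ 2 - 1) ^ 2 = σ ^ 2 - 1 := Real.sq_sqrt (by nlinarith)
    rw [div_eq_iff (two_ne_zero)]
    have hmul : x * (σ - Real.sqrt (σ ^ 2 - 1)) = 1 := by
      rw [hxe]; linear_combination -hs2
    have h2 : x⁻¹ = σ - Real.sqrt (σ ^ 2 - 1) :=
      (eq_inv_of_mul_eq_one_right hmul).symm
    rw [h2, hxe]; ring
  · intro h
    have hσ1 : 1 < σ := by nlinarith [sq_nonneg (x - 1)]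
    have hxi : 0 ≤ x - x⁻¹ := by nlinarith [sq_nonneg x]
    have hsq : σ ^ 2 - 1 = ((x - x⁻¹) / 2) ^ 2 := by
      rw [← h]; field_simp; ring
    constructor
    · rw [hsq, Real.sqrt_sq (by linarith), ← h]; ring
    · exact hσ1

lemma tan_half_formula (θ : ℝ) (h1 : 0 < Real.sin θ) (h2 : 0 < Real.cos θ) :
    (1 + Real.sin (2 * θ - Real.pi / 2)) / Real.cos (2 * θ - Real.pi / 2) = Real.tan θ := by
  rw [Real.sin_sub_pi_div_two, Real.cos_sub_pi_div_two, Real.sin_two_mul, Real.cos_two_mul',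
    Real.tan_eq_sin_div_cos]
  have hpy := Real.sin_sq_add_cos_sq θ
  rw [div_eq_div_iff (by nlinarith) (by positivity)]
  linear_combination (-Real.cos θ) * hpy

lemma trig_id : ∀ ψ : ℝ, 0 < ψ → ψ < Real.pi / 2 →
    (Real.cos ψ)⁻¹ + Real.sqrt (((Real.cos ψ)⁻¹) ^ 2 - 1) =
      Real.tan ((Real.pi / 2 + ψ) / 2) := by
  intro ψ h1 h2
  have hpi := Real.pi_pos
  have hcos : 0 < Real.cos ψ := Real.cos_pos_of_mem_Ioo ⟨by linarith, h2⟩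
  have hsin : 0 < Real.sin ψ := Real.sin_pos_of_pos_of_lt_pi h1 (by linarith)
  have hθ1 : 0 < (Real.pi / 2 + ψ) / 2 := by positivity
  have hθ2 : (Real.pi / 2 + ψ) / 2 < Real.pi / 2 := by linarith
  have hcθ : 0 < Real.cos ((Real.pi / 2 + ψ) / 2) :=
    Real.cos_pos_of_mem_Ioo ⟨by linarith, hθ2⟩
  have hsθ : 0 < Real.sin ((Real.pi / 2 + ψ) / 2) :=
    Real.sin_pos_of_pos_of_lt_pi hθ1 (by linarith)
  have hsqrt : Real.sqrt (((Real.cos ψ)⁻¹) ^ 2 - 1) = Real.sin ψ / Real.cos ψ := by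
    have heq : ((Real.cos ψ)⁻¹) ^ 2 - 1 = (Real.sin ψ / Real.cos ψ) ^ 2 := by
      have hpy := Real.sin_sq_add_cos_sq ψ
      field_simp
      linear_combination -hpy
    rw [heq, Real.sqrt_sq (by positivity)]
  rw [hsqrt, inv_eq_one_div, ← add_div]
  have harg : 2 * ((Real.pi / 2 + ψ) / 2) - Real.pi / 2 = ψ := by ring
  have := tan_half_formula ((Real.pi / 2 + ψ) / 2) hsθ hcθ
  rw [harg] at this
  exact this

end SVAux

namespace SVAux

lemma count_sv (A : Matrix (Fin n) (Fin n) ℂ) (x : ℝ) (hx : 0 ≤ x) :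
    (singularValues A).count x = nullity (A * Aᴴ - ((x ^ 2 : ℝ) : ℂ) • 1) := by
  classical
  rw [singularValues, Multiset.count_map]
  have h1 : ∀ i ∈ (Finset.univ : Finset (Fin n)).val,
      (x = Real.sqrt ((Matrix.isHermitian_mul_conjTranspose_self A).eigenvalues i)) ↔
      ((Matrix.isHermitian_mul_conjTranspose_self A).eigenvalues i = x ^ 2) := by
    intro i _
    constructor
    · intro h
      rw [h, Real.sq_sqrt (Matrix.eigenvalues_self_mul_conjTranspose_nonneg A i)]
    · intro h
      rw [h, Real.sqrt_sq hx]
  rw [Multiset.filter_congr h1]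
  rw [show Multiset.card (Multiset.filter
      (fun i => (Matrix.isHermitian_mul_conjTranspose_self A).eigenvalues i = x ^ 2)
      (Finset.univ : Finset (Fin n)).val) = Fintype.card
      {i // (Matrix.isHermitian_mul_conjTranspose_self A).eigenvalues i = x ^ 2} from by
    rw [Fintype.card_subtype]; rfl]
  exact card_eig_eq_nullity (A * Aᴴ) _ (x ^ 2)

lemma sv_pos {B : Matrix (Fin n) (Fin n) ℂ} (hB2 : B * B = 1) :
    ∀ x ∈ singularValues B, 0 < x := by
  intro x hx
  rw [singularValues, Multiset.mem_map] at hx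
  obtain ⟨i, _, rfl⟩ := hx
  apply Real.sqrt_pos.mpr
  rcases lt_or_eq_of_le (Matrix.eigenvalues_self_mul_conjTranspose_nonneg B i) with h | h
  · exact h
  · exfalso
    have hdet : (B * Bᴴ).det ≠ 0 := by
      rw [det_mul, det_conjTranspose]
      have hdB : B.det * B.det = 1 := by rw [← det_mul, hB2, det_one]
      intro h0
      rcases mul_eq_zero.mp h0 with h1 | h1
      · rw [h1, zero_mul] at hdB; exact zero_ne_one hdB
      · rw [star_eq_zero.mp h1, mul_zero] at hdB; exact zero_ne_one hdB
    apply hdet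
    rw [(Matrix.isHermitian_mul_conjTranspose_self B).det_eq_prod_eigenvalues]
    apply Finset.prod_eq_zero (Finset.mem_univ i)
    rw [← h]
    norm_num

end SVAux

/-- Let `M` be idempotent and `B = 2M - I`. The singular values of `B`
strictly greater than `1`, with multiplicity, are exactly the values `σ + √(σ² - 1)`
where `σ` ranges (with multiplicity) over the singular values of `M` strictly greater
than `1`; moreover each reciprocal `(σ + √(σ² - 1))⁻¹` is also a singular value of `B`
with the same multiplicity (these are exactly the singular values of `B` less than
`1`), and writing `σ = 1/cos ψ` with `0 < ψ < π/2` the corresponding singular value of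
`B` is `tan(½(π/2 + ψ))`. -/
theorem singularValues_involutory_from_idempotent {n : ℕ}
    (M : Matrix (Fin n) (Fin n) ℂ) (hM : M * M = M)
    (B : Matrix (Fin n) (Fin n) ℂ) (hB : B = 2 • M - 1) :
    Multiset.filter (fun x => 1 < x) (singularValues B) =
        Multiset.map (fun σ => σ + Real.sqrt (σ ^ 2 - 1))
          (Multiset.filter (fun σ => 1 < σ) (singularValues M)) ∧
      Multiset.filter (fun x => x < 1) (singularValues B) =
        Multiset.map (fun σ => (σ + Real.sqrt (σ ^ 2 - 1))⁻¹)
          (Multiset.filter (fun σ => 1 < σ) (singularValues M)) ∧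
      ∀ ψ : ℝ, 0 < ψ → ψ < Real.pi / 2 →
        (Real.cos ψ)⁻¹ + Real.sqrt (((Real.cos ψ)⁻¹) ^ 2 - 1) =
          Real.tan ((Real.pi / 2 + ψ) / 2) := by
  classical
  have hsmul : ((2 : ℕ) • M : Matrix (Fin n) (Fin n) ℂ) = (2 : ℂ) • M :=
    (Nat.cast_smul_eq_nsmul ℂ 2 M).symm
  have hB2 : B * B = 1 := by
    rw [hB, hsmul]
    simp only [sub_mul, mul_sub, smul_mul_assoc, mul_smul_comm, mul_one, one_mul]
    rw [hM]
    module
  have hBM : B + 1 = (2 : ℂ) • M := by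
    rw [hB, hsmul]
    abel
  have hposB := SVAux.sv_pos hB2
  have M1 : ∀ x : ℝ, 1 < x →
      (singularValues B).count x = (singularValues M).count ((x + x⁻¹) / 2) := by
    intro x hx
    have hx0 : (0 : ℝ) < x := by linarith
    have hl : 1 < x ^ 2 := by nlinarith
    rw [SVAux.count_sv B x hx0.le, SVAux.count_sv M ((x + x⁻¹) / 2) (by positivity)]
    rw [le_antisymm (SVAux.forward_le hB2 (x ^ 2) hl) (SVAux.backward_le hB2 (x ^ 2) hl)]
    have hP : B * Bᴴ + B + Bᴴ + 1 = (4 : ℂ) • (M * Mᴴ) := by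
      have h4 : (B + 1) * (B + 1)ᴴ = B * Bᴴ + B + Bᴴ + 1 := by
        rw [conjTranspose_add, conjTranspose_one, mul_add, add_mul, add_mul, mul_one,
          one_mul, one_mul]
        abel
      rw [← h4, hBM, conjTranspose_smul, smul_mul_assoc, mul_smul_comm, smul_smul]
      norm_num
    have hq : ((x ^ 2 + 2 + (x ^ 2)⁻¹ : ℝ) : ℂ) • (1 : Matrix (Fin n) (Fin n) ℂ) =
        (4 : ℂ) • (((((x + x⁻¹) / 2) ^ 2 : ℝ) : ℂ) • 1) := by
      rw [smul_smul]
      congr 1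
      have hr : (x ^ 2 + 2 + (x ^ 2)⁻¹ : ℝ) = 4 * (((x + x⁻¹) / 2) ^ 2) := by
        have hx' : x ≠ 0 := ne_of_gt hx0
        field_simp
        ring
      rw [hr]
      push_cast
      ring
    rw [hP, hq, ← smul_sub, SVAux.nullity_smul (4 : ℂ) (by norm_num)]
  have M2 : ∀ x : ℝ, 0 < x →
      (singularValues B).count x = (singularValues B).count x⁻¹ := by
    intro x hx
    rw [SVAux.count_sv B x hx.le, SVAux.count_sv B x⁻¹ (by positivity)]
    rw [show (((x⁻¹) ^ 2 : ℝ) : ℂ) = (((x ^ 2 : ℝ) : ℂ))⁻¹ from by push_cast; ring]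
    exact SVAux.nullity_pair hB2 ((x ^ 2 : ℝ) : ℂ)
      (by simp only [ne_eq, Complex.ofReal_eq_zero]; positivity)
  refine ⟨?_, ?_, SVAux.trig_id⟩
  · refine Multiset.ext.mpr fun x => ?_
    rw [Multiset.count_filter]
    split_ifs with hx
    · rw [M1 x hx, Multiset.count_map, Multiset.filter_filter,
        Multiset.count_eq_card_filter_eq]
      congr 1
      apply Multiset.filter_congr
      intro σ _
      exact (SVAux.gequiv hx).symm
    · symm
      rw [Multiset.count_eq_zero]
      intro hmem
      rw [Multiset.mem_map] at hmem
      obtain ⟨σ, hσ, hgx⟩ := hmem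
      rw [Multiset.mem_filter] at hσ
      apply hx
      rw [← hgx]
      have := Real.sqrt_nonneg (σ ^ 2 - 1)
      linarith [hσ.2]
  · refine Multiset.ext.mpr fun x => ?_
    rw [Multiset.count_filter]
    split_ifs with hx
    · by_cases hx0 : 0 < x
      · have hxi : 1 < x⁻¹ := (one_lt_inv_iff₀).mpr ⟨hx0, hx⟩
        rw [M2 x hx0, M1 x⁻¹ hxi, inv_inv]
        rw [Multiset.count_map, Multiset.filter_filter, Multiset.count_eq_card_filter_eq]
        congr 1
        apply Multiset.filter_congr
        intro σ _
        constructor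
        · intro h
          have h2 := (SVAux.gequiv (σ := σ) hxi).mpr
            (show (x⁻¹ + (x⁻¹)⁻¹) / 2 = σ by rw [inv_inv]; exact h)
          refine ⟨?_, h2.2⟩
          rw [← h2.1, inv_inv]
        · rintro ⟨h1, h2⟩
          have h3 : x⁻¹ = σ + Real.sqrt (σ ^ 2 - 1) := by rw [h1, inv_inv]
          have h4 := (SVAux.gequiv hxi).mp ⟨h3, h2⟩
          rw [inv_inv] at h4
          exact h4
      · push_neg at hx0
        rw [Multiset.count_eq_zero.mpr
          (fun hmem => absurd (hposB x hmem) (not_lt.mpr hx0))]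
        symm
        rw [Multiset.count_eq_zero]
        intro hmem
        rw [Multiset.mem_map] at hmem
        obtain ⟨σ, hσ, hgx⟩ := hmem
        rw [Multiset.mem_filter] at hσ
        have hgpos : 0 < (σ + Real.sqrt (σ ^ 2 - 1))⁻¹ := by
          have h5 := Real.sqrt_nonneg (σ ^ 2 - 1)
          have h6 : 0 < σ + Real.sqrt (σ ^ 2 - 1) := by linarith [hσ.2]
          positivity
        rw [hgx] at hgpos
        linarith
    · symm
      rw [Multiset.count_eq_zero]
      intro hmem
      rw [Multiset.mem_map] at hmem
      obtain ⟨σ, hσ, hgx⟩ := hmem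
      rw [Multiset.mem_filter] at hσ
      have h5 := Real.sqrt_nonneg (σ ^ 2 - 1)
      have hg1 : 1 < σ + Real.sqrt (σ ^ 2 - 1) := by linarith [hσ.2]
      have h7 : (σ + Real.sqrt (σ ^ 2 - 1))⁻¹ < 1 := by
        rw [inv_lt_one_iff₀]
        right
        exact hg1
      rw [hgx] at h7
      exact hx h7
end

section
/- Let M ∈ ℂ^{n×n} be an idempotent matrix of rank r, s = n − r, t = rank(M) − dim(null(I − MM^H)), with singular value decomposition M = 𝒰𝒮(𝒰O)^H as in the main theorem, where O = [[C, 0, ES],[0, I_{n−2t}, 0],[S, 0, −EC]] is real orthogonal, 𝒮 = diag(C^{−1}, I_{r−t}, 0_{s−t}, 0_t), and E = diag(±1, …, ±1) ∈ ℝ^{t×t}. Then, setting 𝒲 = 𝒰O(I_{n−t} ⊕ E), the matrix 𝒲 is unitary and M = 𝒲(O𝒮)𝒲^H; equivalently, O^T𝒮 = (I_{n−t} ⊕ E) N^T (I_{n−t} ⊕ E) where N = [[I_t, 0, 0, T],[0, I_{r−t}, 0, 0],[0, 0, 0_{s−t}, 0],[0, 0, 0, 0_t]] and T = C^{−1}S.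 -/
open Matrix

/-- The real matrix `N = [[I_t,0,0,T],[0,I_{r-t},0,0],[0,0,0_{s-t},0],[0,0,0,0_t]]`
with `T = C⁻¹ S = diag(tan ψ₁, …, tan ψ_t)` placed in the last `t` columns of the
first `t` rows. -/
noncomputable def Nmat (n r t : ℕ) (ψ : ℕ → ℝ) : Matrix (Fin n) (Fin n) ℝ :=
  Matrix.of fun i j =>
    if (i : ℕ) = (j : ℕ) ∧ (i : ℕ) < r then 1
    else if (i : ℕ) < t ∧ (j : ℕ) = n - t + (i : ℕ) then Real.tan (ψ (i : ℕ))
    else 0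

/-- The diagonal matrix `𝒮 = diag(C⁻¹, I_{r-t}, 0_{s-t}, 0_t)` with
`C = diag(cos ψ₁, …, cos ψ_t)`. -/
noncomputable def Smat (n r t : ℕ) (ψ : ℕ → ℝ) : Matrix (Fin n) (Fin n) ℝ :=
  Matrix.of fun i j =>
    if (i : ℕ) = (j : ℕ) then
      (if (i : ℕ) < t then (Real.cos (ψ (i : ℕ)))⁻¹ else if (i : ℕ) < r then 1 else 0)
    else 0

/-- The real matrix `O = [[C,0,ES],[0,I_{n-2t},0],[S,0,-EC]]` where the first `t` and
last `t` rows/columns carry the nontrivial blocks, `C = diag(cos ψ_j)`,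
`S = diag(sin ψ_j)` and `E = diag(±1)`. -/
noncomputable def Omat (n t : ℕ) (ψ E : ℕ → ℝ) : Matrix (Fin n) (Fin n) ℝ :=
  Matrix.of fun i j =>
    if (i : ℕ) < t then
      (if (j : ℕ) = (i : ℕ) then Real.cos (ψ (i : ℕ))
       else if (j : ℕ) = n - t + (i : ℕ) then E (i : ℕ) * Real.sin (ψ (i : ℕ))
       else 0)
    else if (i : ℕ) < n - t then (if (j : ℕ) = (i : ℕ) then 1 else 0)
    else
      (if (j : ℕ) = (i : ℕ) - (n - t) then Real.sin (ψ ((i : ℕ) - (n - t)))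
       else if (j : ℕ) = (i : ℕ) then -(E ((i : ℕ) - (n - t)) * Real.cos (ψ ((i : ℕ) - (n - t))))
       else 0)

/-- The block diagonal matrix `I_{n-t} ⊕ E` with `E = diag(±1) ∈ ℝ^{t×t}`. -/
noncomputable def Fmat (n t : ℕ) (E : ℕ → ℝ) : Matrix (Fin n) (Fin n) ℝ :=
  Matrix.diagonal fun i => if (i : ℕ) < n - t then 1 else E ((i : ℕ) - (n - t))

/-!
`I - M Mᴴ = (I - M) + M (I - M)ᴴ` has rank at most `2 (n - r)`, which forces `r + t ≤ n`: the
first `r` and the last `t` indices are disjoint. Every row `k` of `O` is then supported on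
`{k, σ k}`, `σ` the involution swapping `k` and `n - t + k`, with unit-norm rows and orthogonal
partner rows, so `O` is orthogonal. `E² = 1` gives `Oᵀ = F O F`, and `F`, `𝒮` are diagonal, so
`Oᵀ 𝒮 = F (O 𝒮) F = F Nᵀ F`. Finally `O F (O 𝒮) F Oᵀ = O Oᵀ 𝒮 Oᵀ = 𝒮 Oᵀ`, which is `M`
conjugated by `U`.
-/

namespace Matrix

variable {m n R : Type*} [Fintype n] [Field R]

theorem rank_add_le (A B : Matrix m n R) : (A + B).rank ≤ A.rank + B.rank := by
  rw [rank, mulVecLin_add]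
  exact (Submodule.finrank_mono (LinearMap.range_add_le _ _)).trans
    (Submodule.finrank_add_le_finrank_add_finrank _ _)

theorem rank_add_finrank_ker (A : Matrix m n R) :
    A.rank + Module.finrank R (LinearMap.ker A.mulVecLin) = Fintype.card n := by
  rw [rank, LinearMap.finrank_range_add_finrank_ker, Module.finrank_fintype_fun_eq_card]

theorem rank_add_rank_one_sub_le [DecidableEq n] {M : Matrix n n R} (hM : IsIdempotentElem M) :
    M.rank + (1 - M).rank ≤ Fintype.card n :=
  rank_add_rank_le_card_of_mul_eq_zero hM.mul_one_sub_self

theorem rank_one_sub_mul_conjTranspose_le [DecidableEq n] [PartialOrder R] [StarRing R]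
    [StarOrderedRing R] (M : Matrix n n R) :
    (1 - M * Mᴴ).rank ≤ 2 * (1 - M).rank := by
  have hsplit : 1 - M * Mᴴ = (1 - M) + M * (1 - M)ᴴ := by
    rw [conjTranspose_sub, conjTranspose_one]; noncomm_ring
  calc (1 - M * Mᴴ).rank ≤ (1 - M).rank + (M * (1 - M)ᴴ).rank := hsplit ▸ rank_add_le _ _
    _ ≤ (1 - M).rank + (1 - M)ᴴ.rank := by gcongr; exact rank_mul_le_right _ _
    _ = 2 * (1 - M).rank := by rw [rank_conjTranspose, two_mul]

theorem mul_transpose_eq_one_of_apply_eq {ι R : Type*} [Fintype ι] [DecidableEq ι] [CommRing R]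
    {A : Matrix ι ι R} {σ : ι → ι} (hσ : Function.Involutive σ) {d e : ι → R}
    (hA : ∀ i j, A i j = (if j = i then d i else 0) + (if j = σ i then e i else 0))
    (hnorm : ∀ i, d i ^ 2 + e i ^ 2 = 1) (hcross : ∀ i, d i * e (σ i) + e i * d (σ i) = 0) :
    A * Aᵀ = 1 := by
  ext i j
  simp only [mul_apply, transpose_apply, hA, add_mul, mul_add, ite_mul, mul_ite, zero_mul,
    mul_zero, Finset.sum_add_distrib, Finset.sum_ite_eq', Finset.mem_univ, if_true,
    hσ.injective.eq_iff, hσ.eq_iff]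
  rcases eq_or_ne j i with rfl | hji
  · by_cases hfix : j = σ j
    · have hcross' := hcross j
      rw [← hfix] at hcross'
      simp only [← hfix, if_true, one_apply_eq]
      linear_combination hnorm j + hcross'
    · simp only [hfix, if_true, if_false, one_apply_eq]
      linear_combination hnorm j
  · by_cases hjσ : j = σ i
    · subst hjσ
      simp only [hji, if_true, if_false, one_apply_ne' hji]
      linear_combination hcross i
    · simp only [hji, hjσ, if_false, one_apply_ne' hji, add_zero]

end Matrix

open scoped ComplexOrder in
theorem rank_add_rank_sub_nullityOneSubMMH_le {n : ℕ} {M : Matrix (Fin n) (Fin n) ℂ}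
    (hM : IsIdempotentElem M) : M.rank + (M.rank - nullityOneSubMMH M) ≤ n := by
  have h₁ := rank_add_rank_one_sub_le hM
  have h₂ := rank_one_sub_mul_conjTranspose_le M
  have h₃ := rank_add_finrank_ker (1 - M * Mᴴ)
  rw [Fintype.card_fin] at h₁ h₃
  unfold nullityOneSubMMH
  omega

def outerBlockSwap (n t : ℕ) (k : Fin n) : Fin n :=
  ⟨if (k : ℕ) < t then n - t + k else if (k : ℕ) < n - t then k else k - (n - t), by
    have := k.isLt; split_ifs <;> omega⟩

theorem outerBlockSwap_involutive {n t : ℕ} (htn : t + t ≤ n) :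
    Function.Involutive (outerBlockSwap n t) := by
  intro k
  have := k.isLt
  ext
  simp only [outerBlockSwap]
  split_ifs <;> omega

section

variable {n t : ℕ} {ψ E : ℕ → ℝ}

open Real

theorem Omat_mul_transpose (htn : t + t ≤ n) (hE : ∀ k < t, E k ^ 2 = 1) :
    Omat n t ψ E * (Omat n t ψ E)ᵀ = 1 := by
  refine mul_transpose_eq_one_of_apply_eq (outerBlockSwap_involutive htn)
    (d := fun i => if (i : ℕ) < t then cos (ψ i) else if (i : ℕ) < n - t then 1
      else -(E (i - (n - t)) * cos (ψ (i - (n - t)))))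
    (e := fun i => if (i : ℕ) < t then E i * sin (ψ i) else if (i : ℕ) < n - t then 0
      else sin (ψ (i - (n - t)))) (fun i j => ?_) (fun i => ?_) (fun i => ?_)
  · have := i.isLt
    simp only [Omat, of_apply, outerBlockSwap, Fin.ext_iff]
    split_ifs <;> first | omega | ring
  · split_ifs with h₁ h₂
    · linear_combination sin_sq_add_cos_sq (ψ i) + sin (ψ i) ^ 2 * hE i h₁
    · norm_num
    · linear_combination sin_sq_add_cos_sq (ψ (i - (n - t))) +
        cos (ψ (i - (n - t))) ^ 2 * hE (i - (n - t)) (by omega)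
  · have := i.isLt
    simp only [outerBlockSwap]
    split_ifs with h₁ <;> first | omega | skip
    · rw [Nat.add_sub_cancel_left]
      linear_combination -(sin (ψ i) * cos (ψ i)) * hE i h₁
    · ring
    · linear_combination -(sin (ψ (i - (n - t))) * cos (ψ (i - (n - t)))) *
        hE (i - (n - t)) (by omega)

theorem transpose_Omat (htn : t + t ≤ n) (hE : ∀ k < t, E k ^ 2 = 1) :
    (Omat n t ψ E)ᵀ = Fmat n t E * Omat n t ψ E * Fmat n t E := by
  ext ⟨i, hi⟩ ⟨j, hj⟩
  simp only [transpose_apply, Fmat, mul_diagonal, diagonal_mul, Omat, of_apply]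
  split_ifs <;> subst_vars <;> grind

theorem Fmat_mul_self (hE : ∀ k < t, E k ^ 2 = 1) : Fmat n t E * Fmat n t E = 1 := by
  rw [Fmat, diagonal_mul_diagonal, ← diagonal_one]
  congr 1
  ext ⟨i, hi⟩
  split_ifs with h
  · exact mul_one 1
  · rw [← sq, hE _ (by omega)]

theorem Smat_eq_diagonal (r : ℕ) :
    Smat n r t ψ = diagonal fun i : Fin n =>
      if (i : ℕ) < t then (cos (ψ i))⁻¹ else if (i : ℕ) < r then 1 else 0 := by
  ext i j
  simp only [Smat, of_apply, diagonal_apply, Fin.ext_iff]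

theorem Fmat_commute_Smat (r : ℕ) : Commute (Fmat n t E) (Smat n r t ψ) := by
  rw [Smat_eq_diagonal]
  exact commute_diagonal _ _

theorem Omat_mul_Smat {r : ℕ} (htr : t ≤ r) (hrt : r + t ≤ n) (hcos : ∀ k < t, cos (ψ k) ≠ 0) :
    Omat n t ψ E * Smat n r t ψ = (Nmat n r t ψ)ᵀ := by
  ext ⟨i, hi⟩ ⟨j, hj⟩
  simp only [Smat_eq_diagonal, mul_diagonal, transpose_apply, Omat, Nmat, of_apply]
  split_ifs <;> subst_vars <;> grind [tan_eq_sin_div_cos]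

end

section

open Complex

theorem conjTranspose_map_ofReal {m n : Type*} (A : Matrix m n ℝ) :
    (A.map ofReal)ᴴ = Aᵀ.map ofReal := by
  rw [← conjTranspose_eq_transpose_of_trivial, conjTranspose_map _ fun x => (conj_ofReal x).symm]

theorem map_ofReal_mul {m n o : Type*} [Fintype n] (A : Matrix m n ℝ) (B : Matrix n o ℝ) :
    (A * B).map ofReal = A.map ofReal * B.map ofReal :=
  Matrix.map_mul (f := ofRealHom)

theorem map_ofReal_mem_unitaryGroup {n : Type*} [Fintype n] [DecidableEq n] {A : Matrix n n ℝ}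
    (hA : A * Aᵀ = 1) : A.map ofReal ∈ unitaryGroup n ℂ := by
  rw [mem_unitaryGroup_iff, star_eq_conjTranspose, conjTranspose_map_ofReal, ← map_ofReal_mul, hA,
    Matrix.map_one _ ofReal_zero ofReal_one]

end

theorem svd_idempotent_alternative_form_general {n : ℕ}
    (M : Matrix (Fin n) (Fin n) ℂ) (hM : M * M = M)
    (r t : ℕ) (hr : r = M.rank)
    (ht : t = M.rank - nullityOneSubMMH M)
    (ψ E : ℕ → ℝ)
    (hψ : ∀ k, k < t → 0 < ψ k ∧ ψ k < Real.pi / 2)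
    (hE : ∀ k, k < t → E k = 1 ∨ E k = -1)
    (U : Matrix (Fin n) (Fin n) ℂ) (hU : U ∈ Matrix.unitaryGroup (Fin n) ℂ)
    (hsvd : M = U * (Smat n r t ψ).map Complex.ofReal *
      (U * (Omat n t ψ E).map Complex.ofReal)ᴴ) :
    U * (Omat n t ψ E).map Complex.ofReal * (Fmat n t E).map Complex.ofReal ∈
        Matrix.unitaryGroup (Fin n) ℂ ∧
      M = (U * (Omat n t ψ E).map Complex.ofReal * (Fmat n t E).map Complex.ofReal) *
            ((Omat n t ψ E).map Complex.ofReal * (Smat n r t ψ).map Complex.ofReal) *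
            (U * (Omat n t ψ E).map Complex.ofReal * (Fmat n t E).map Complex.ofReal)ᴴ ∧
      (Omat n t ψ E)ᵀ * Smat n r t ψ = Fmat n t E * (Nmat n r t ψ)ᵀ * Fmat n t E := by
  have hrt : r + t ≤ n := hr ▸ ht ▸ rank_add_rank_sub_nullityOneSubMMH_le hM
  have htr : t ≤ r := by omega
  have hE2 : ∀ k < t, E k ^ 2 = 1 := fun k hk => by rcases hE k hk with h | h <;> simp [h]
  have hcos : ∀ k < t, Real.cos (ψ k) ≠ 0 := fun k hk =>
    (Real.cos_pos_of_mem_Ioo ⟨by linarith [(hψ k hk).1, Real.pi_pos], (hψ k hk).2⟩).ne'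
  set O := Omat n t ψ E
  set S := Smat n r t ψ
  set F := Fmat n t E
  have hOO : O * Oᵀ = 1 := Omat_mul_transpose (by omega) hE2
  have hFT : Fᵀ = F := diagonal_transpose _
  have hOTS : Oᵀ * S = F * (O * S) * F := by
    rw [transpose_Omat (by omega) hE2, Matrix.mul_assoc (F * O),
      show F * S = S * F from (Fmat_commute_Smat r).eq]
    simp only [Matrix.mul_assoc]
  have hreal : O * F * (O * S) * (F * Oᵀ) = S * Oᵀ := by
    calc O * F * (O * S) * (F * Oᵀ) = O * (F * (O * S) * F) * Oᵀ := by
          simp only [Matrix.mul_assoc]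
      _ = S * Oᵀ := by rw [← hOTS, ← Matrix.mul_assoc O, hOO, Matrix.one_mul]
  refine ⟨mul_mem (mul_mem hU (map_ofReal_mem_unitaryGroup hOO))
    (map_ofReal_mem_unitaryGroup (by rw [hFT]; exact Fmat_mul_self hE2)), ?_,
    by rw [hOTS, Omat_mul_Smat htr hrt hcos]⟩
  calc M = U * (S * Oᵀ).map Complex.ofReal * Uᴴ := by
        rw [hsvd, conjTranspose_mul, conjTranspose_map_ofReal, map_ofReal_mul]
        simp only [Matrix.mul_assoc]
    _ = _ := by
        rw [← hreal]
        simp only [conjTranspose_mul, conjTranspose_map_ofReal, hFT, map_ofReal_mul,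
          Matrix.mul_assoc]

/-- Let `M` be idempotent of rank `r`, `s = n - r`,
`t = rank M - dim null(I - M Mᴴ)`, with SVD `M = 𝒰 𝒮 (𝒰 O)ᴴ` as in the main theorem.
Then `𝒲 = 𝒰 O (I_{n-t} ⊕ E)` is unitary and `M = 𝒲 (O 𝒮) 𝒲ᴴ`; equivalently
`Oᵀ 𝒮 = (I_{n-t} ⊕ E) Nᵀ (I_{n-t} ⊕ E)`. -/
theorem svd_idempotent_alternative_form {n : ℕ}
    (M : Matrix (Fin n) (Fin n) ℂ) (hM : M * M = M)
    (r s t : ℕ) (hr : r = M.rank) (hs : s = n - r)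
    (ht : t = M.rank - nullityOneSubMMH M)
    (ψ E : ℕ → ℝ)
    (hψdec : ∀ k, k + 1 < t → ψ (k + 1) ≤ ψ k)
    (hψ : ∀ k, k < t → 0 < ψ k ∧ ψ k < Real.pi / 2)
    (hE : ∀ k, k < t → E k = 1 ∨ E k = -1)
    (U : Matrix (Fin n) (Fin n) ℂ) (hU : U ∈ Matrix.unitaryGroup (Fin n) ℂ)
    (hsvd : M = U * (Smat n r t ψ).map Complex.ofReal *
      (U * (Omat n t ψ E).map Complex.ofReal)ᴴ) :
    U * (Omat n t ψ E).map Complex.ofReal * (Fmat n t E).map Complex.ofReal ∈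
        Matrix.unitaryGroup (Fin n) ℂ ∧
      M = (U * (Omat n t ψ E).map Complex.ofReal * (Fmat n t E).map Complex.ofReal) *
            ((Omat n t ψ E).map Complex.ofReal * (Smat n r t ψ).map Complex.ofReal) *
            (U * (Omat n t ψ E).map Complex.ofReal * (Fmat n t E).map Complex.ofReal)ᴴ ∧
      (Omat n t ψ E)ᵀ * Smat n r t ψ = Fmat n t E * (Nmat n r t ψ)ᵀ * Fmat n t E :=
  svd_idempotent_alternative_form_general M hM r t hr ht ψ E hψ hE U hU hsvd
end
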